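/- arXiv:2603.29446 — 3 statements merged into one kernel-verified Lean document; each statement's English description precedes it below -/
import Mathlib

section
/- Let 0 ≤ α, β, γ ≤ 1 with either (i) 1/2 < max(α,β) ≤ 1 and γ < min(α,β), or (ii) max(α,β) ≤ 1/2 and γ < α + β - 1/2. Then there exists C > 0 independent of N such that for all u, v ∈ H_N, ‖uv‖_{H_N^γ} ≤ C ‖u‖_{H_N^α} ‖v‖_{H_N^β}. -/
/-- Eigenvalues of the discrete Laplacian: `λ_{m,N} = 2 N² (1 - cos(2π m / N))`. -/
noncomputable def lamd (N m : ℕ) : ℝ := 2 * (N : ℝ)^2 * (1 - Real.cos (2 * Real.pi * m / N))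

/-- `L²([0,1])` inner product of two step functions constant on the intervals `I_j`. -/
noncomputable def ip (N : ℕ) (f g : Fin N → ℝ) : ℝ := (1 / (N : ℝ)) * ∑ j, f j * g j

/-- Discrete trigonometric eigenfunction `φ_{m,N}` (value on the cell `I_j`). -/
noncomputable def phiN (N m : ℕ) : Fin N → ℝ :=
  fun j => if m = 0 then 1 else Real.sqrt 2 * Real.cos (2 * Real.pi * m * (j : ℕ) / N)

/-- Discrete trigonometric eigenfunction `ψ_{m,N}` (value on the cell `I_j`). -/
noncomputable def psiN (N m : ℕ) : Fin N → ℝ :=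
  fun j => Real.sqrt 2 * Real.sin (2 * Real.pi * m * (j : ℕ) / N)

/-- Square of the discrete Sobolev norm `‖f‖²_{H_N^γ}`. -/
noncomputable def sobNormSq (N : ℕ) (γ : ℝ) (f : Fin N → ℝ) : ℝ :=
  ∑ m ∈ Finset.range ((N - 1) / 2 + 1),
    (1 + lamd N m) ^ γ * ((ip N f (phiN N m))^2 + (ip N f (psiN N m))^2)

/-- Discrete Sobolev norm `‖f‖_{H_N^γ}`. -/
noncomputable def sobNorm (N : ℕ) (γ : ℝ) (f : Fin N → ℝ) : ℝ := Real.sqrt (sobNormSq N γ f)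

open Finset

noncomputable section

/-- complex Fourier coefficient -/
noncomputable def ck (N : ℕ) (f : Fin N → ℝ) (k : ℤ) : ℂ :=
  (N : ℂ)⁻¹ * ∑ j : Fin N, (f j : ℂ) * Complex.exp ((-(2 * Real.pi * k * j / N) : ℝ) * Complex.I)

lemma ck_eq (N : ℕ) (f : Fin N → ℝ) (k : ℤ) :
    ck N f k = (((N:ℝ)⁻¹ * ∑ j : Fin N, f j * Real.cos (2 * Real.pi * k * j / N) : ℝ) : ℂ)
      - (((N:ℝ)⁻¹ * ∑ j : Fin N, f j * Real.sin (2 * Real.pi * k * j / N) : ℝ) : ℂ) * Complex.I := by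
  unfold ck
  have : ∀ j : Fin N, (f j : ℂ) * Complex.exp ((-(2 * Real.pi * k * j / N) : ℝ) * Complex.I)
      = ((f j * Real.cos (2 * Real.pi * k * j / N) : ℝ) : ℂ)
        - ((f j * Real.sin (2 * Real.pi * k * j / N) : ℝ) : ℂ) * Complex.I := by
    intro j
    rw [Complex.exp_mul_I, ← Complex.ofReal_cos, ← Complex.ofReal_sin, Real.cos_neg,
      Real.sin_neg]
    push_cast
    ring
  rw [Finset.sum_congr rfl (fun j _ => this j)]
  rw [Finset.sum_sub_distrib]
  push_cast
  rw [← Finset.sum_mul]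
  ring

lemma ck_re (N : ℕ) (f : Fin N → ℝ) (k : ℤ) :
    (ck N f k).re = (N:ℝ)⁻¹ * ∑ j : Fin N, f j * Real.cos (2 * Real.pi * k * j / N) := by
  have h : ∀ A B : ℝ, ((A : ℂ) - (B : ℂ) * Complex.I).re = A := by intro A B; simp
  rw [ck_eq, h]

lemma ck_im (N : ℕ) (f : Fin N → ℝ) (k : ℤ) :
    (ck N f k).im = -((N:ℝ)⁻¹ * ∑ j : Fin N, f j * Real.sin (2 * Real.pi * k * j / N)) := by
  have h : ∀ A B : ℝ, ((A : ℂ) - (B : ℂ) * Complex.I).im = -B := by intro A B; simp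
  rw [ck_eq, h]


def zN (N : ℕ) (t : ℤ) : ℂ := Complex.exp ((2 * Real.pi * t / N : ℝ) * Complex.I)

lemma zN_ne_zero (N : ℕ) (t : ℤ) : zN N t ≠ 0 := Complex.exp_ne_zero _

lemma zN_zpow (N : ℕ) (t a : ℤ) :
    zN N t ^ a = Complex.exp ((2 * Real.pi * t * a / N : ℝ) * Complex.I) := by
  rw [zN, ← Complex.exp_int_mul]
  congr 1
  push_cast
  ring

lemma zN_pow_N (N : ℕ) (hN : 0 < N) (t : ℤ) : zN N t ^ (N : ℕ) = 1 := by
  have h := zN_zpow N t N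
  rw [zpow_natCast] at h
  rw [h]
  have hN' : (N : ℝ) ≠ 0 := by positivity
  have : (2 * Real.pi * t * (N:ℤ) / N : ℝ) = 2 * Real.pi * t := by
    push_cast; field_simp
  rw [this]
  have : ((2 * Real.pi * t : ℝ) : ℂ) * Complex.I = (t : ℤ) * (2 * Real.pi * Complex.I) := by
    push_cast; ring
  rw [this, Complex.exp_int_mul_two_pi_mul_I]

lemma zN_eq_one_iff (N : ℕ) (hN : 0 < N) (t : ℤ) : zN N t = 1 ↔ (N : ℤ) ∣ t := by
  constructor
  · intro h
    rw [zN, Complex.exp_eq_one_iff] at h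
    obtain ⟨n, hn⟩ := h
    have hre : (2 * Real.pi * t / N : ℝ) = n * (2 * Real.pi) := by
      have := congrArg Complex.im hn
      simpa [Complex.ext_iff] using this
    have hN' : (N : ℝ) ≠ 0 := by positivity
    have hpi := Real.pi_ne_zero
    have hre' : 2 * Real.pi * (t : ℝ) = n * (2 * Real.pi) * N := by
      field_simp at hre; rw [hre]; ring
    have ht : (t : ℝ) = (N : ℝ) * n := by
      have h2 : (2 * Real.pi) ≠ 0 := by positivity
      apply mul_left_cancel₀ h2
      linear_combination hre'
    exact ⟨n, by exact_mod_cast ht⟩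
  · rintro ⟨n, rfl⟩
    have hN' : (N : ℝ) ≠ 0 := by positivity
    have harg : ((2 * Real.pi * (((N:ℤ) * n : ℤ) : ℝ) / N : ℝ) : ℂ) * Complex.I
        = (n : ℤ) * (2 * Real.pi * Complex.I) := by
      have hN'' : (N : ℂ) ≠ 0 := by exact_mod_cast Nat.cast_ne_zero.mpr (by omega)
      push_cast
      field_simp
    rw [zN, harg, Complex.exp_int_mul_two_pi_mul_I]

lemma fin_sum_zpow (N : ℕ) (hN : 0 < N) (z : ℂ) (hz : z ^ N = 1) :
    ∑ j : Fin N, z ^ (j : ℕ) = if z = 1 then (N : ℂ) else 0 := by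
  rw [Fin.sum_univ_eq_sum_range]
  split_ifs with h
  · subst h; simp
  · rw [geom_sum_eq h, hz]
    simp

lemma Icc_sum_zpow (N M : ℕ) (hNM : N = 2 * M + 1) (z : ℂ) (hz : z ^ N = 1) :
    ∑ a ∈ Finset.Icc (-(M:ℤ)) M, z ^ a = if z = 1 then (N : ℂ) else 0 := by
  have hN : 0 < N := by omega
  have hz0 : z ≠ 0 := by
    intro h; rw [h] at hz; simp [pow_eq_zero_iff, hN.ne'] at hz
  have hmap : Finset.Icc (-(M:ℤ)) M
      = Finset.map ⟨fun i : ℕ => (i : ℤ) - M, show Function.Injective (fun i : ℕ => (i : ℤ) - M) from fun a b h => by simp only [sub_left_inj, Nat.cast_inj] at h; exact h⟩ (Finset.range N) := by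
    ext x
    simp only [Finset.mem_Icc, Finset.mem_map, Finset.mem_range, Function.Embedding.coeFn_mk]
    constructor
    · intro hx; exact ⟨(x + M).toNat, by omega, by omega⟩
    · rintro ⟨i, hi, rfl⟩; omega
  rw [hmap, Finset.sum_map]
  simp only [Function.Embedding.coeFn_mk]
  have : ∀ i : ℕ, z ^ ((i:ℤ) - M) = z ^ (-(M:ℤ)) * z ^ i := by
    intro i
    rw [sub_eq_add_neg, add_comm, zpow_add₀ hz0]
    rw [zpow_natCast]
  rw [Finset.sum_congr rfl (fun i _ => this i), ← Finset.mul_sum]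
  split_ifs with h
  · subst h; simp [hNM]
  · rw [geom_sum_eq h, hz]
    simp


lemma zN_mul (N : ℕ) (a b : ℤ) : zN N a * zN N b = zN N (a + b) := by
  rw [zN, zN, zN, ← Complex.exp_add]
  congr 1
  push_cast
  ring

lemma zN_natPow (N : ℕ) (t : ℤ) (j : ℕ) :
    zN N t ^ j = Complex.exp ((2 * Real.pi * t * j / N : ℝ) * Complex.I) := by
  rw [← zpow_natCast, zN_zpow]
  norm_num

lemma ck_zN (N : ℕ) (f : Fin N → ℝ) (k : ℤ) :
    ck N f k = (N : ℂ)⁻¹ * ∑ j : Fin N, (f j : ℂ) * zN N (-k) ^ (j : ℕ) := by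
  unfold ck
  congr 1
  refine Finset.sum_congr rfl fun j _ => ?_
  rw [zN_natPow]
  congr 2
  push_cast
  ring

lemma zN_congr (N : ℕ) (hN : 0 < N) {a b : ℤ} (h : (N : ℤ) ∣ a - b) : zN N a = zN N b := by
  have h1 : zN N (a - b) = 1 := (zN_eq_one_iff N hN _).mpr h
  have h2 := zN_mul N (a - b) b
  rw [h1, one_mul, sub_add_cancel] at h2
  exact h2.symm

lemma ck_congr (N : ℕ) (hN : 0 < N) (f : Fin N → ℝ) {k k' : ℤ} (h : (N : ℤ) ∣ k - k') :
    ck N f k = ck N f k' := by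
  rw [ck_zN, ck_zN]
  congr 1
  refine Finset.sum_congr rfl fun j _ => ?_
  rw [zN_congr N hN (a := -k) (b := -k') (by rw [show -k - -k' = -(k - k') by ring]; exact dvd_neg.mpr h)]

lemma zN_inv (N : ℕ) (a : ℤ) : zN N (-a) = (zN N a)⁻¹ := by
  have := zN_mul N (-a) a
  simp only [neg_add_cancel] at this
  have h0 : zN N 0 = 1 := by rw [zN]; norm_num
  rw [h0] at this
  field_simp [zN_ne_zero] at this ⊢
  linear_combination this

lemma ck_inv (N M : ℕ) (hNM : N = 2 * M + 1) (u : Fin N → ℝ) (j : Fin N) :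
    (u j : ℂ) = ∑ a ∈ Finset.Icc (-(M:ℤ)) M, ck N u a * zN N a ^ (j : ℕ) := by
  have hN : 0 < N := by omega
  have hNC : (N : ℂ) ≠ 0 := Nat.cast_ne_zero.mpr hN.ne'
  symm
  calc ∑ a ∈ Finset.Icc (-(M:ℤ)) M, ck N u a * zN N a ^ (j : ℕ)
      = ∑ a ∈ Finset.Icc (-(M:ℤ)) M, (N : ℂ)⁻¹ *
          ∑ j' : Fin N, (u j' : ℂ) * (zN N (-a) ^ (j' : ℕ) * zN N a ^ (j : ℕ)) := by
        refine Finset.sum_congr rfl fun a _ => ?_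
        rw [ck_zN, mul_assoc, Finset.sum_mul]
        congr 1
        refine Finset.sum_congr rfl fun j' _ => ?_
        ring
    _ = (N : ℂ)⁻¹ * ∑ j' : Fin N, (u j' : ℂ) *
          ∑ a ∈ Finset.Icc (-(M:ℤ)) M, zN N ((j : ℕ) - (j' : ℕ)) ^ a := by
        rw [← Finset.mul_sum]
        congr 1
        rw [Finset.sum_comm]
        refine Finset.sum_congr rfl fun j' _ => ?_
        rw [Finset.mul_sum]
        refine Finset.sum_congr rfl fun a _ => ?_
        congr 1
        rw [zN_zpow, zN_natPow, zN_natPow, ← Complex.exp_add]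
        congr 1
        push_cast
        ring
    _ = (N : ℂ)⁻¹ * ∑ j' : Fin N, (u j' : ℂ) *
          (if j' = j then (N : ℂ) else 0) := by
        congr 1
        refine Finset.sum_congr rfl fun j' _ => ?_
        congr 1
        rw [Icc_sum_zpow N M hNM _ (zN_pow_N N hN _)]
        by_cases hjj : j' = j
        · subst hjj
          rw [if_pos, if_pos rfl]
          rw [zN_eq_one_iff N hN]
          simp
        · rw [if_neg, if_neg hjj]
          rw [zN_eq_one_iff N hN]
          intro hd
          have habs : |((j : ℕ) : ℤ) - ((j' : ℕ) : ℤ)| < (N : ℤ) := by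
            have := j.isLt; have := j'.isLt
            rw [abs_lt]
            constructor <;> omega
          have hz := Int.eq_zero_of_abs_lt_dvd hd habs
          exact hjj (Fin.ext (by omega))
    _ = (u j : ℂ) := by
        simp only [mul_ite, mul_zero, Finset.sum_ite_eq', Finset.mem_univ, if_true]
        field_simp

lemma ck_conv (N M : ℕ) (hNM : N = 2 * M + 1) (u v : Fin N → ℝ) (k : ℤ) :
    ck N (fun j => u j * v j) k = ∑ a ∈ Finset.Icc (-(M:ℤ)) M, ck N u a * ck N v (k - a) := by
  have hN : 0 < N := by omega
  calc ck N (fun j => u j * v j) k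
      = (N : ℂ)⁻¹ * ∑ j : Fin N, ((u j : ℂ) * (v j : ℂ)) * zN N (-k) ^ (j : ℕ) := by
        rw [ck_zN]; push_cast; rfl
    _ = ∑ j : Fin N,
          ∑ a ∈ Finset.Icc (-(M:ℤ)) M, (N : ℂ)⁻¹ * (ck N u a * ((v j : ℂ) * zN N (-(k - a)) ^ (j : ℕ))) := by
        rw [Finset.mul_sum]
        refine Finset.sum_congr rfl fun j _ => ?_
        have hu : (N:ℂ)⁻¹ * (((u j : ℂ) * (v j : ℂ)) * zN N (-k) ^ (j : ℕ))
            = (N:ℂ)⁻¹ * ((u j : ℂ) * ((v j : ℂ) * zN N (-k) ^ (j : ℕ))) := by ring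
        rw [hu, ck_inv N M hNM u j, Finset.sum_mul, Finset.mul_sum]
        refine Finset.sum_congr rfl fun a _ => ?_
        have hz : zN N a ^ (j:ℕ) * zN N (-k) ^ (j:ℕ) = zN N (-(k - a)) ^ (j : ℕ) := by
          rw [← mul_pow, zN_mul]
          congr 1
          ring
        calc (N:ℂ)⁻¹ * (ck N u a * zN N a ^ (j:ℕ) * ((v j : ℂ) * zN N (-k) ^ (j:ℕ)))
            = (N:ℂ)⁻¹ * (ck N u a * ((v j : ℂ) * (zN N a ^ (j:ℕ) * zN N (-k) ^ (j:ℕ)))) := by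
              ring
          _ = (N:ℂ)⁻¹ * (ck N u a * ((v j : ℂ) * zN N (-(k - a)) ^ (j : ℕ))) := by rw [hz]
    _ = ∑ a ∈ Finset.Icc (-(M:ℤ)) M, ck N u a * ck N v (k - a) := by
        rw [Finset.sum_comm]
        refine Finset.sum_congr rfl fun a _ => ?_
        rw [ck_zN N v (k - a), Finset.mul_sum, Finset.mul_sum]
        refine Finset.sum_congr rfl fun j _ => ?_
        ring

lemma normSq_ck_neg (N : ℕ) (f : Fin N → ℝ) (k : ℤ) :
    Complex.normSq (ck N f (-k)) = Complex.normSq (ck N f k) := by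
  have hc : ∀ j : Fin N, Real.cos (2 * Real.pi * ((-k : ℤ) : ℝ) * j / N)
      = Real.cos (2 * Real.pi * (k : ℝ) * j / N) := by
    intro j
    rw [show (2 * Real.pi * ((-k : ℤ) : ℝ) * j / N) = -(2 * Real.pi * (k:ℝ) * j / N) by
      push_cast; ring, Real.cos_neg]
  have hs : ∀ j : Fin N, Real.sin (2 * Real.pi * ((-k : ℤ) : ℝ) * j / N)
      = -Real.sin (2 * Real.pi * (k : ℝ) * j / N) := by
    intro j
    rw [show (2 * Real.pi * ((-k : ℤ) : ℝ) * j / N) = -(2 * Real.pi * (k:ℝ) * j / N) by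
      push_cast; ring, Real.sin_neg]
  have h1 : (∑ j : Fin N, f j * Real.cos (2 * Real.pi * ((-k : ℤ) : ℝ) * j / N))
      = ∑ j : Fin N, f j * Real.cos (2 * Real.pi * (k : ℝ) * j / N) :=
    Finset.sum_congr rfl fun j _ => by rw [hc j]
  have h2 : (∑ j : Fin N, f j * Real.sin (2 * Real.pi * ((-k : ℤ) : ℝ) * j / N))
      = -∑ j : Fin N, f j * Real.sin (2 * Real.pi * (k : ℝ) * j / N) := by
    rw [← Finset.sum_neg_distrib]
    exact Finset.sum_congr rfl fun j _ => by rw [hs j]; ring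
  rw [Complex.normSq_apply, Complex.normSq_apply, ck_re, ck_im, ck_re, ck_im]
  rw [h1, h2]
  ring

lemma ip_phi (N : ℕ) (f : Fin N → ℝ) (m : ℕ) (hm : m ≠ 0) :
    ip N f (phiN N m) = Real.sqrt 2 * (ck N f (m : ℤ)).re := by
  rw [ip, ck_re, Finset.mul_sum, Finset.mul_sum, Finset.mul_sum]
  refine Finset.sum_congr rfl fun j _ => ?_
  simp only [phiN, if_neg hm]
  push_cast
  ring

lemma ip_phi0 (N : ℕ) (f : Fin N → ℝ) :
    ip N f (phiN N 0) = (ck N f 0).re := by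
  rw [ip, ck_re, Finset.mul_sum, Finset.mul_sum]
  refine Finset.sum_congr rfl fun j _ => ?_
  simp only [phiN, if_pos rfl]
  push_cast
  simp

lemma ck0_im (N : ℕ) (f : Fin N → ℝ) : (ck N f 0).im = 0 := by
  rw [ck_im]
  have : ∀ j : Fin N, f j * Real.sin (2 * Real.pi * ((0:ℤ):ℝ) * j / N) = 0 := by
    intro j
    push_cast
    simp
  rw [Finset.sum_congr rfl fun j _ => this j]
  simp

lemma ip_psi (N : ℕ) (f : Fin N → ℝ) (m : ℕ) :
    ip N f (psiN N m) = -(Real.sqrt 2 * (ck N f (m : ℤ)).im) := by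
  rw [ip, ck_im]; simp only [psiN]
  rw [Finset.mul_sum]
  rw [show -(Real.sqrt 2 * -((N:ℝ)⁻¹ * ∑ j : Fin N, f j * Real.sin (2 * Real.pi * ((m:ℤ):ℝ) * j / N)))
      = Real.sqrt 2 * ((N:ℝ)⁻¹ * ∑ j : Fin N, f j * Real.sin (2 * Real.pi * ((m:ℤ):ℝ) * j / N)) by ring]
  rw [Finset.mul_sum, Finset.mul_sum]
  refine Finset.sum_congr rfl fun j _ => ?_
  push_cast
  ring

lemma term_eq (N : ℕ) (f : Fin N → ℝ) (m : ℕ) (hm : m ≠ 0) :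
    (ip N f (phiN N m))^2 + (ip N f (psiN N m))^2 = 2 * Complex.normSq (ck N f (m : ℤ)) := by
  rw [ip_phi N f m hm, ip_psi N f m, Complex.normSq_apply]
  have h2 : Real.sqrt 2 ^ 2 = 2 := Real.sq_sqrt (by norm_num)
  nlinarith [h2]

lemma term_eq0 (N : ℕ) (f : Fin N → ℝ) :
    (ip N f (phiN N 0))^2 + (ip N f (psiN N 0))^2 = Complex.normSq (ck N f 0) := by
  rw [ip_phi0 N f, ip_psi N f 0, Complex.normSq_apply]
  rw [show ((0:ℕ):ℤ) = 0 by norm_num, ck0_im]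
  ring

lemma sum_Icc_int (M : ℕ) (g : ℤ → ℝ) :
    ∑ k ∈ Finset.Icc (-(M:ℤ)) M, g k
      = g 0 + ∑ m ∈ Finset.range M, (g (m+1) + g (-(m+1))) := by
  induction M with
  | zero => simp
  | succ n ih =>
    have hins : Finset.Icc (-((n+1:ℕ):ℤ)) ((n+1:ℕ):ℤ)
        = insert (-((n+1:ℕ):ℤ)) (insert (((n+1:ℕ):ℤ)) (Finset.Icc (-(n:ℤ)) (n:ℤ))) := by
      ext x
      simp only [Finset.mem_Icc, Finset.mem_insert]
      push_cast
      omega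
    rw [hins, Finset.sum_insert, Finset.sum_insert, ih, Finset.sum_range_succ]
    · push_cast
      ring
    · simp only [Finset.mem_Icc]
      push_cast
      omega
    · simp only [Finset.mem_insert, Finset.mem_Icc]
      push_cast
      omega

lemma sob_eq (N M : ℕ) (hNM : N = 2 * M + 1) (s : ℝ) (f : Fin N → ℝ) :
    sobNormSq N s f = ∑ k ∈ Finset.Icc (-(M:ℤ)) M,
      (1 + lamd N k.natAbs) ^ s * Complex.normSq (ck N f k) := by
  have hM : (N - 1) / 2 = M := by omega
  rw [sobNormSq, hM]
  rw [sum_Icc_int M (fun k => (1 + lamd N k.natAbs) ^ s * Complex.normSq (ck N f k))]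
  rw [Finset.sum_range_succ']
  simp only [Int.natAbs_zero, Int.natAbs_neg]
  rw [term_eq0 N f]
  rw [add_comm]
  congr 1
  refine Finset.sum_congr rfl fun m _ => ?_
  have hna : ((m:ℤ)+1).natAbs = m + 1 := by omega
  have hneg : Complex.normSq (ck N f (-((m:ℤ)+1))) = Complex.normSq (ck N f ((m:ℤ)+1)) :=
    normSq_ck_neg N f ((m:ℤ)+1)
  rw [hna, hneg]
  rw [term_eq N f (m+1) (by omega)]
  rw [show ((m+1:ℕ):ℤ) = (m:ℤ)+1 by push_cast; ring]
  ring


def Jw (x : ℤ) : ℝ := 1 + (x:ℝ)^2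

lemma Jw_pos (x : ℤ) : 0 < Jw x := by unfold Jw; positivity
lemma Jw_one_le (x : ℤ) : 1 ≤ Jw x := by unfold Jw; nlinarith [sq_nonneg ((x:ℝ))]
lemma Jw_neg (x : ℤ) : Jw (-x) = Jw x := by unfold Jw; push_cast; ring
lemma Jw_rpow_pos (x : ℤ) (t : ℝ) : 0 < Jw x ^ t := Real.rpow_pos_of_pos (Jw_pos x) t

lemma Jw_mono {x y : ℤ} (h : |x| ≤ |y|) : Jw x ≤ Jw y := by
  unfold Jw
  have h' : |(x:ℝ)| ≤ |(y:ℝ)| := by exact_mod_cast h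
  nlinarith [abs_nonneg (x:ℝ), sq_abs (x:ℝ), sq_abs (y:ℝ)]

lemma real_rpow_add_le (a b p : ℝ) (ha : 0 ≤ a) (hb : 0 ≤ b) (hp : 0 ≤ p) (hp1 : p ≤ 1) :
    (a + b) ^ p ≤ a ^ p + b ^ p := by
  have h := NNReal.rpow_add_le_add_rpow (a.toNNReal) (b.toNNReal) hp hp1
  have h1 : ((a.toNNReal + b.toNNReal : NNReal) : ℝ) = a + b := by
    simp [Real.coe_toNNReal _ ha, Real.coe_toNNReal _ hb]
  calc (a+b)^p = ((a.toNNReal + b.toNNReal : NNReal):ℝ)^p := by rw [h1]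
    _ = (((a.toNNReal + b.toNNReal)^p : NNReal) : ℝ) := by rw [NNReal.coe_rpow]
    _ ≤ ((a.toNNReal^p + b.toNNReal^p : NNReal) : ℝ) := by exact_mod_cast h
    _ = a^p + b^p := by
      push_cast [NNReal.coe_rpow]
      rw [Real.coe_toNNReal _ ha, Real.coe_toNNReal _ hb]

lemma Jw_add_le (x y : ℤ) : Jw (x + y) ≤ 2 * (Jw x + Jw y) := by
  unfold Jw
  push_cast
  nlinarith [sq_nonneg ((x:ℝ) - y), sq_nonneg ((x:ℝ) + y), sq_nonneg (x:ℝ), sq_nonneg (y:ℝ)]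

lemma Jw_rpow_add_le (x y : ℤ) (p : ℝ) (hp : 0 ≤ p) (hp1 : p ≤ 1) :
    Jw (x + y) ^ p ≤ 2 * (Jw x ^ p + Jw y ^ p) := by
  have h1 : Jw (x + y) ^ p ≤ (2 * (Jw x + Jw y)) ^ p :=
    Real.rpow_le_rpow (Jw_pos _).le (Jw_add_le x y) hp
  have h2 : (2 * (Jw x + Jw y)) ^ p = 2 ^ p * (Jw x + Jw y) ^ p :=
    Real.mul_rpow (by norm_num) (by linarith [Jw_pos x, Jw_pos y])
  have h3 : (Jw x + Jw y) ^ p ≤ Jw x ^ p + Jw y ^ p :=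
    real_rpow_add_le _ _ p (Jw_pos _).le (Jw_pos _).le hp hp1
  have h4 : (2:ℝ) ^ p ≤ 2 := by
    calc (2:ℝ)^p ≤ (2:ℝ)^(1:ℝ) := Real.rpow_le_rpow_of_exponent_le (by norm_num) hp1
      _ = 2 := Real.rpow_one 2
  have h5 : 0 ≤ (Jw x + Jw y) ^ p := Real.rpow_nonneg (by linarith [Jw_pos x, Jw_pos y]) p
  have h6 : 0 ≤ (2:ℝ) ^ p := by positivity
  calc Jw (x + y) ^ p ≤ 2 ^ p * (Jw x + Jw y) ^ p := by rw [← h2]; exact h1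
    _ ≤ 2 * (Jw x ^ p + Jw y ^ p) := by nlinarith

lemma summable_Jw (s : ℝ) (hs : 1/2 < s) : Summable (fun x : ℤ => Jw x ^ (-s)) := by
  have key : ∀ n : ℕ, Jw ((n+1:ℕ) : ℤ) ^ (-s) ≤ 1 / ((n+1:ℝ)) ^ (2*s) := by
    intro n
    have h1 : ((n+1:ℝ)) ^ (2*s) ≤ Jw (((n+1:ℕ)) : ℤ) ^ s := by
      have hle : ((n+1:ℝ))^(2:ℕ) ≤ Jw (((n+1:ℕ)) : ℤ) := by
        unfold Jw; push_cast; nlinarith [sq_nonneg ((n:ℝ))]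
      calc ((n+1:ℝ)) ^ (2*s) = (((n+1:ℝ))^(2:ℕ))^s := by
            rw [← Real.rpow_natCast ((n+1:ℝ)) 2, ← Real.rpow_mul (by positivity)]
            norm_num
        _ ≤ Jw (((n+1:ℕ)) : ℤ) ^ s := Real.rpow_le_rpow (by positivity) hle (by linarith)
    rw [Real.rpow_neg (Jw_pos _).le, one_div]
    exact inv_anti₀ (by positivity) h1
  have hbase : Summable (fun n : ℕ => 1 / ((n+1:ℝ)) ^ (2*s)) := by
    have h1 : Summable (fun n : ℕ => 1 / ((n:ℝ)) ^ (2*s)) :=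
      Real.summable_one_div_nat_rpow.mpr (by linarith)
    have := (summable_nat_add_iff (f := fun n : ℕ => 1 / ((n:ℝ)) ^ (2*s)) 1).mpr h1
    simpa using this
  have hnat : Summable (fun n : ℕ => Jw (n : ℤ) ^ (-s)) := by
    rw [← summable_nat_add_iff 1]
    refine Summable.of_nonneg_of_le (fun n => (Jw_rpow_pos _ _).le) (fun n => ?_) hbase
    exact_mod_cast key n
  have hneg : Summable (fun n : ℕ => Jw (-(n : ℤ)) ^ (-s)) := by
    refine hnat.congr fun n => ?_
    rw [Jw_neg]
  exact Summable.of_nat_of_neg hnat hneg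

/-- uniform bound for shifted convolution-type sums -/
lemma conv_sum_bound (p q : ℝ) (hp : 0 ≤ p) (hq : 0 ≤ q) (hpq : 1/2 < p + q) :
    ∃ C : ℝ, 0 < C ∧ ∀ (S : Finset ℤ) (k : ℤ),
      ∑ a ∈ S, Jw a ^ (-p) * Jw (k - a) ^ (-q) ≤ C := by
  have hsum := summable_Jw (p+q) hpq
  refine ⟨2 * (∑' x : ℤ, Jw x ^ (-(p+q))) + 1, ?_, ?_⟩
  · have : 0 ≤ ∑' x : ℤ, Jw x ^ (-(p+q)) := tsum_nonneg fun x => (Jw_rpow_pos _ _).le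
    linarith
  intro S k
  have hterm : ∀ a : ℤ, Jw a ^ (-p) * Jw (k - a) ^ (-q)
      ≤ Jw a ^ (-(p+q)) + Jw (k - a) ^ (-(p+q)) := by
    intro a
    rcases le_total (Jw a) (Jw (k - a)) with hle | hle
    · have h1 : Jw (k-a) ^ (-q) ≤ Jw a ^ (-q) := by
        rcases eq_or_lt_of_le hq with rfl | hq'
        · simp
        · exact Real.rpow_le_rpow_of_nonpos (Jw_pos _) hle (by linarith)
      have h2 : Jw a ^ (-p) * Jw (k-a) ^ (-q) ≤ Jw a ^ (-p) * Jw a ^ (-q) :=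
        mul_le_mul_of_nonneg_left h1 (Jw_rpow_pos _ _).le
      have h3 : Jw a ^ (-p) * Jw a ^ (-q) = Jw a ^ (-(p+q)) := by
        rw [← Real.rpow_add (Jw_pos _)]; ring_nf
      calc Jw a ^ (-p) * Jw (k - a) ^ (-q) ≤ Jw a ^ (-(p+q)) := by rw [← h3]; exact h2
        _ ≤ Jw a ^ (-(p+q)) + Jw (k - a) ^ (-(p+q)) := by
          linarith [(Jw_rpow_pos (k-a) (-(p+q))).le]
    · have h1 : Jw a ^ (-p) ≤ Jw (k-a) ^ (-p) := by
        rcases eq_or_lt_of_le hp with rfl | hp'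
        · simp
        · exact Real.rpow_le_rpow_of_nonpos (Jw_pos _) hle (by linarith)
      have h2 : Jw a ^ (-p) * Jw (k-a) ^ (-q) ≤ Jw (k-a) ^ (-p) * Jw (k-a) ^ (-q) :=
        mul_le_mul_of_nonneg_right h1 (Jw_rpow_pos _ _).le
      have h3 : Jw (k-a) ^ (-p) * Jw (k-a) ^ (-q) = Jw (k-a) ^ (-(p+q)) := by
        rw [← Real.rpow_add (Jw_pos _)]; ring_nf
      calc Jw a ^ (-p) * Jw (k - a) ^ (-q) ≤ Jw (k-a) ^ (-(p+q)) := by rw [← h3]; exact h2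
        _ ≤ Jw a ^ (-(p+q)) + Jw (k - a) ^ (-(p+q)) := by
          linarith [(Jw_rpow_pos a (-(p+q))).le]
  have hS1 : ∑ a ∈ S, Jw a ^ (-(p+q)) ≤ ∑' x : ℤ, Jw x ^ (-(p+q)) :=
    Summable.sum_le_tsum S (fun a _ => (Jw_rpow_pos _ _).le) hsum
  have hS2 : ∑ a ∈ S, Jw (k - a) ^ (-(p+q)) ≤ ∑' x : ℤ, Jw x ^ (-(p+q)) := by
    rw [← Finset.sum_image (f := fun x : ℤ => Jw x ^ (-(p+q))) (g := fun a => k - a)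
      (by intro a ha b hb h; have h2 : k - a = k - b := h; omega)]
    exact Summable.sum_le_tsum _ (fun a _ => (Jw_rpow_pos _ _).le) hsum
  calc ∑ a ∈ S, Jw a ^ (-p) * Jw (k - a) ^ (-q)
      ≤ ∑ a ∈ S, (Jw a ^ (-(p+q)) + Jw (k - a) ^ (-(p+q))) :=
        Finset.sum_le_sum fun a _ => hterm a
    _ = ∑ a ∈ S, Jw a ^ (-(p+q)) + ∑ a ∈ S, Jw (k - a) ^ (-(p+q)) := Finset.sum_add_distrib
    _ ≤ 2 * (∑' x : ℤ, Jw x ^ (-(p+q))) + 1 := by linarith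


lemma lamd_nonneg (N m : ℕ) : 0 ≤ lamd N m := by
  unfold lamd
  nlinarith [Real.cos_le_one (2 * Real.pi * m / N), sq_nonneg ((N:ℝ))]

lemma lamd_eq_sin (N m : ℕ) : lamd N m = 4 * (N:ℝ)^2 * Real.sin (Real.pi * m / N) ^ 2 := by
  unfold lamd
  have h : 2 * Real.pi * m / N = 2 * (Real.pi * m / N) := by ring
  rw [h, Real.cos_two_mul]
  have := Real.sin_sq_add_cos_sq (Real.pi * m / N)
  nlinarith [this]

lemma wgt_bounds (N M m : ℕ) (hNM : N = 2 * M + 1) (hm : m ≤ M) :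
    Jw (m:ℤ) ≤ 1 + lamd N m ∧ 1 + lamd N m ≤ 4 * Real.pi^2 * Jw (m:ℤ) := by
  have hN : 0 < N := by omega
  have hNR : (0:ℝ) < N := by exact_mod_cast hN
  have hpi := Real.pi_pos
  set θ := Real.pi * m / N with hθ
  have hθ0 : 0 ≤ θ := by positivity
  have hθπ2 : θ ≤ Real.pi / 2 := by
    rw [hθ, div_le_div_iff₀ hNR (by norm_num)]
    have hmN : (2*m:ℝ) ≤ N := by
      have : (2*m:ℕ) ≤ N := by omega
      exact_mod_cast this
    nlinarith
  have hs0 : 0 ≤ Real.sin θ := Real.sin_nonneg_of_nonneg_of_le_pi hθ0 (by linarith)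
  have hs1 : 2 / Real.pi * θ ≤ Real.sin θ := Real.mul_le_sin hθ0 hθπ2
  have hs2 : Real.sin θ ≤ θ := Real.sin_le hθ0
  have hlow : 2 * m / (N:ℝ) ≤ Real.sin θ := by
    have : 2 / Real.pi * θ = 2 * m / N := by
      rw [hθ]; field_simp
    linarith [this ▸ hs1]
  have hJ : Jw (m:ℤ) = 1 + (m:ℝ)^2 := by unfold Jw; push_cast; ring
  rw [lamd_eq_sin, hJ]
  constructor
  · have h1 : (2 * m / (N:ℝ))^2 ≤ Real.sin θ ^ 2 := by
      have h0 : 0 ≤ 2 * (m:ℝ) / N := by positivity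
      nlinarith
    have h2 : (2 * m / (N:ℝ))^2 * (4 * (N:ℝ)^2) = 16 * (m:ℝ)^2 := by
      field_simp
      ring
    nlinarith [sq_nonneg ((m:ℝ))]
  · have h1 : Real.sin θ ^ 2 ≤ θ^2 := by nlinarith
    have h2 : 4 * (N:ℝ)^2 * θ^2 = 4 * Real.pi^2 * (m:ℝ)^2 := by
      rw [hθ]
      field_simp
    have hpi3 : (3:ℝ) < Real.pi := Real.pi_gt_three
    nlinarith [sq_nonneg ((m:ℝ)), sq_nonneg (Real.sin θ)]

-- bmod facts
lemma bmod_range (N M : ℕ) (hNM : N = 2 * M + 1) (x : ℤ) :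
    Int.bmod x N ∈ Finset.Icc (-(M:ℤ)) M := by
  have hN : 0 < N := by omega
  have h1 := Int.le_bmod (x := x) hN
  have h2 := Int.bmod_lt (x := x) hN
  have hNM' : (N:ℤ) = 2 * M + 1 := by exact_mod_cast hNM
  simp only [Finset.mem_Icc]
  omega

lemma bmod_congr_of_dvd (N : ℕ) (hN : 0 < N) {x y : ℤ} (h : (N:ℤ) ∣ x - y) :
    Int.bmod x N = Int.bmod y N := by
  have d1 : (N:ℤ) ∣ Int.bmod x N - x := Int.dvd_bmod_sub_self
  have d2 : (N:ℤ) ∣ Int.bmod y N - y := Int.dvd_bmod_sub_self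
  have d3 : (N:ℤ) ∣ Int.bmod x N - Int.bmod y N := by
    have : Int.bmod x N - Int.bmod y N = (Int.bmod x N - x) - (Int.bmod y N - y) + (x - y) := by
      ring
    rw [this]
    exact dvd_add (dvd_sub d1 d2) h
  have b1 := Int.le_bmod (x := x) hN
  have b2 := Int.bmod_lt (x := x) hN
  have b3 := Int.le_bmod (x := y) hN
  have b4 := Int.bmod_lt (x := y) hN
  have habs : |Int.bmod x N - Int.bmod y N| < (N:ℤ) := by
    rw [abs_lt]; omega
  have := Int.eq_zero_of_abs_lt_dvd d3 habs
  omega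

lemma bmod_eq_self (N M : ℕ) (hNM : N = 2 * M + 1) {x : ℤ} (hx : x ∈ Finset.Icc (-(M:ℤ)) M) :
    Int.bmod x N = x := by
  have d1 : (N:ℤ) ∣ Int.bmod x N - x := Int.dvd_bmod_sub_self
  have hb := bmod_range N M hNM x
  simp only [Finset.mem_Icc] at hx hb
  have hNM' : (N:ℤ) = 2 * M + 1 := by exact_mod_cast hNM
  have habs : |Int.bmod x N - x| < (N:ℤ) := by rw [abs_lt]; omega
  have := Int.eq_zero_of_abs_lt_dvd d1 habs
  omega

lemma key_J_ineq (N M : ℕ) (hNM : N = 2 * M + 1) {k a y : ℤ}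
    (hk : k ∈ Finset.Icc (-(M:ℤ)) M) (ha : a ∈ Finset.Icc (-(M:ℤ)) M)
    (hy : y ∈ Finset.Icc (-(M:ℤ)) M) (hd : (N:ℤ) ∣ a + y - k) :
    Jw k ≤ Jw (a + y) := by
  simp only [Finset.mem_Icc] at hk ha hy
  have hNM' : (N:ℤ) = 2 * M + 1 := by exact_mod_cast hNM
  rcases hd with ⟨c, hc⟩
  rcases eq_or_ne c 0 with rfl | hc0
  · have : a + y = k := by omega
    rw [this]
  · have h1 : (1:ℤ) ≤ |c| := by
      rcases abs_pos.mpr hc0 with h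
      omega
    have h2 : (N:ℤ) ≤ |(N:ℤ) * c| := by
      rw [abs_mul, abs_of_nonneg (by omega : (0:ℤ) ≤ (N:ℤ))]
      nlinarith [abs_nonneg c]
    have h3 : |(N:ℤ) * c| ≤ |a + y| + |k| := by
      have : (N:ℤ) * c = (a + y) - k := by omega
      rw [this]
      exact abs_sub (a+y) k
    have h4 : |k| ≤ |a + y| := by
      have hkM : |k| ≤ (M:ℤ) := by rw [abs_le]; omega
      omega
    exact (by
      unfold Jw
      have h' : |(k:ℝ)| ≤ |((a+y : ℤ):ℝ)| := by exact_mod_cast h4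
      nlinarith [sq_abs (k:ℝ), sq_abs ((a+y:ℤ):ℝ), abs_nonneg (k:ℝ)])


lemma Jw_natAbs (k : ℤ) : Jw ((k.natAbs : ℕ) : ℤ) = Jw k := by
  unfold Jw
  congr 1
  rw [← sq_abs ((k:ℝ))]
  congr 1
  push_cast [Nat.cast_natAbs]
  rfl

lemma one_add_lamd_pos (N m : ℕ) : 0 < 1 + lamd N m := by linarith [lamd_nonneg N m]

/-- uniform bound on the weighted kernel sums -/
lemma sup_bound (α β γ : ℝ) (hα0 : 0 ≤ α) (hβ0 : 0 ≤ β) (hγ0 : 0 ≤ γ) (hγ1 : γ ≤ 1)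
    (hga : γ < α) (hgb : γ < β) (hsum : 1/2 < α + β - γ) :
    ∃ K : ℝ, 0 < K ∧ ∀ N M : ℕ, N = 2 * M + 1 → ∀ k ∈ Finset.Icc (-(M:ℤ)) M,
      ∑ a ∈ Finset.Icc (-(M:ℤ)) M,
        (1 + lamd N k.natAbs) ^ γ * ((1 + lamd N a.natAbs) ^ α)⁻¹ *
          ((1 + lamd N (Int.bmod (k - a) N).natAbs) ^ β)⁻¹ ≤ K := by
  obtain ⟨C₁, hC₁pos, hC₁⟩ := conv_sum_bound (α - γ) β (by linarith) hβ0 (by linarith)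
  obtain ⟨C₂, hC₂pos, hC₂⟩ := conv_sum_bound α (β - γ) hα0 (by linarith) (by linarith)
  have hpi := Real.pi_gt_three
  have hpisq : (9:ℝ) < Real.pi^2 := by nlinarith
  refine ⟨8 * Real.pi^2 * (3 * C₁ + 3 * C₂), by nlinarith, ?_⟩
  intro N M hNM k hk
  set T := Finset.Icc (-(M:ℤ)) M with hT
  have hkM : k.natAbs ≤ M := by
    simp only [hT, Finset.mem_Icc] at hk; omega
  -- termwise bound
  have hterm : ∀ a ∈ T,
      (1 + lamd N k.natAbs) ^ γ * ((1 + lamd N a.natAbs) ^ α)⁻¹ *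
        ((1 + lamd N (Int.bmod (k - a) N).natAbs) ^ β)⁻¹
      ≤ 8 * Real.pi^2 * ((Jw a ^ (-(α - γ)) * Jw (Int.bmod (k-a) N) ^ (-β))
          + (Jw a ^ (-α) * Jw (Int.bmod (k-a) N) ^ (-(β - γ)))) := by
    intro a haT
    set y := Int.bmod (k - a) N with hy
    have haM : a.natAbs ≤ M := by simp only [hT, Finset.mem_Icc] at haT; omega
    have hyT : y ∈ T := bmod_range N M hNM (k - a)
    have hyM : y.natAbs ≤ M := by simp only [hT, Finset.mem_Icc] at hyT; omega
    -- step 1 : top weight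
    have h1 : (1 + lamd N k.natAbs) ^ γ ≤ 4 * Real.pi^2 * Jw k ^ γ := by
      have hb := (wgt_bounds N M k.natAbs hNM hkM).2
      rw [Jw_natAbs] at hb
      calc (1 + lamd N k.natAbs) ^ γ ≤ (4 * Real.pi^2 * Jw k) ^ γ :=
            Real.rpow_le_rpow (one_add_lamd_pos N _).le hb hγ0
        _ = (4 * Real.pi^2) ^ γ * Jw k ^ γ :=
            Real.mul_rpow (by positivity) (Jw_pos k).le
        _ ≤ 4 * Real.pi^2 * Jw k ^ γ := by
            have : (4 * Real.pi^2 : ℝ) ^ γ ≤ (4 * Real.pi^2 : ℝ) ^ (1:ℝ) :=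
              Real.rpow_le_rpow_of_exponent_le (by nlinarith) hγ1
            rw [Real.rpow_one] at this
            nlinarith [Jw_rpow_pos k γ]
    -- step 2 : lower weights
    have h2 : ((1 + lamd N a.natAbs) ^ α)⁻¹ ≤ Jw a ^ (-α) := by
      have hb := (wgt_bounds N M a.natAbs hNM haM).1
      rw [Jw_natAbs] at hb
      rw [Real.rpow_neg (Jw_pos a).le]
      exact inv_anti₀ (Jw_rpow_pos a α) (Real.rpow_le_rpow (Jw_pos a).le hb hα0)
    have h3 : ((1 + lamd N y.natAbs) ^ β)⁻¹ ≤ Jw y ^ (-β) := by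
      have hb := (wgt_bounds N M y.natAbs hNM hyM).1
      rw [Jw_natAbs] at hb
      rw [Real.rpow_neg (Jw_pos y).le]
      exact inv_anti₀ (Jw_rpow_pos y β) (Real.rpow_le_rpow (Jw_pos y).le hb hβ0)
    -- step 3 : splitting
    have hd : (N:ℤ) ∣ a + y - k := by
      have := Int.dvd_bmod_sub_self (x := k - a) (m := N)
      rw [← hy] at this
      have h' : a + y - k = y - (k - a) := by ring
      rw [h']
      exact this
    have h4 : Jw k ^ γ ≤ 2 * (Jw a ^ γ + Jw y ^ γ) := by
      calc Jw k ^ γ ≤ Jw (a + y) ^ γ :=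
            Real.rpow_le_rpow (Jw_pos k).le (key_J_ineq N M hNM hk haT hyT hd) hγ0
        _ ≤ 2 * (Jw a ^ γ + Jw y ^ γ) := Jw_rpow_add_le a y γ hγ0 hγ1
    -- combine
    have hwk : (0:ℝ) ≤ (1 + lamd N k.natAbs) ^ γ := (Real.rpow_pos_of_pos (one_add_lamd_pos N _) _).le
    have hwa : (0:ℝ) < ((1 + lamd N a.natAbs) ^ α)⁻¹ := by
      exact inv_pos.mpr (Real.rpow_pos_of_pos (one_add_lamd_pos N _) _)
    have hwy : (0:ℝ) < ((1 + lamd N y.natAbs) ^ β)⁻¹ := by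
      exact inv_pos.mpr (Real.rpow_pos_of_pos (one_add_lamd_pos N _) _)
    calc (1 + lamd N k.natAbs) ^ γ * ((1 + lamd N a.natAbs) ^ α)⁻¹ *
          ((1 + lamd N y.natAbs) ^ β)⁻¹
        ≤ (4 * Real.pi^2 * Jw k ^ γ) * (Jw a ^ (-α)) * (Jw y ^ (-β)) := by
          have t1 : (1 + lamd N k.natAbs) ^ γ * ((1 + lamd N a.natAbs) ^ α)⁻¹
              ≤ (4 * Real.pi^2 * Jw k ^ γ) * (Jw a ^ (-α)) := by
            apply mul_le_mul h1 h2 hwa.le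
            nlinarith [Jw_rpow_pos k γ]
          apply mul_le_mul t1 h3 hwy.le
          exact mul_nonneg (mul_nonneg (by positivity) (Jw_rpow_pos k γ).le)
            (Jw_rpow_pos a (-α)).le
      _ ≤ (4 * Real.pi^2 * (2 * (Jw a ^ γ + Jw y ^ γ))) * (Jw a ^ (-α)) * (Jw y ^ (-β)) := by
          have h4' : 4 * Real.pi^2 * Jw k ^ γ ≤ 4 * Real.pi^2 * (2 * (Jw a ^ γ + Jw y ^ γ)) :=
            mul_le_mul_of_nonneg_left h4 (by positivity)
          apply mul_le_mul_of_nonneg_right _ (Jw_rpow_pos y (-β)).le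
          exact mul_le_mul_of_nonneg_right h4' (Jw_rpow_pos a (-α)).le
      _ = 8 * Real.pi^2 * ((Jw a ^ (-(α - γ)) * Jw y ^ (-β))
            + (Jw a ^ (-α) * Jw y ^ (-(β - γ)))) := by
          have e1 : Jw a ^ γ * Jw a ^ (-α) = Jw a ^ (-(α - γ)) := by
            rw [← Real.rpow_add (Jw_pos a)]; ring_nf
          have e2 : Jw y ^ γ * Jw y ^ (-β) = Jw y ^ (-(β - γ)) := by
            rw [← Real.rpow_add (Jw_pos y)]; ring_nf
          calc (4 * Real.pi^2 * (2 * (Jw a ^ γ + Jw y ^ γ))) * (Jw a ^ (-α)) * (Jw y ^ (-β))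
              = 8 * Real.pi^2 * ((Jw a ^ γ * Jw a ^ (-α)) * Jw y ^ (-β)
                + Jw a ^ (-α) * (Jw y ^ γ * Jw y ^ (-β))) := by ring
            _ = _ := by rw [e1, e2]
  -- sum the bound
  have hsplit : ∀ (e : ℝ), ∀ a ∈ T, Jw (Int.bmod (k-a) N) ^ e
      ≤ Jw (k - a) ^ e + Jw ((k - N) - a) ^ e + Jw ((k + N) - a) ^ e := by
    intro e a haT
    set y := Int.bmod (k - a) N with hy
    have hyT : y ∈ T := bmod_range N M hNM (k - a)
    have hd : (N:ℤ) ∣ (k - a) - y := by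
      have h0 := Int.dvd_bmod_sub_self (x := k - a) (m := N)
      rw [← hy] at h0
      have h1 : (k - a) - y = -(y - (k - a)) := by ring
      rw [h1]
      exact dvd_neg.mpr h0
    have hNM' : (N:ℤ) = 2 * (M:ℤ) + 1 := by exact_mod_cast hNM
    have hM0 : (0:ℤ) ≤ (M:ℤ) := by positivity
    simp only [hT, Finset.mem_Icc] at haT hyT
    have hkk := hk
    simp only [hT, Finset.mem_Icc] at hkk
    rcases hd with ⟨c, hc⟩
    have habs : |(k - a) - y| ≤ 3 * (M:ℤ) := by rw [abs_le]; constructor <;> omega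
    have hc2 : c = 0 ∨ c = 1 ∨ c = -1 := by
      by_contra hcon
      push_neg at hcon
      have h2 : 2 ≤ |c| := by
        rcases hcon with ⟨h0', h1', hm1'⟩
        rcases abs_cases c with ⟨he, _⟩ | ⟨he, _⟩ <;> omega
      have h3 : 2 * (N:ℤ) ≤ |(N:ℤ) * c| := by
        rw [abs_mul, abs_of_nonneg (by omega : (0:ℤ) ≤ (N:ℤ))]
        nlinarith
      rw [← hc] at h3
      linarith
    have hcase : y = k - a ∨ y = (k - N) - a ∨ y = (k + N) - a := by
      rcases hc2 with rfl | rfl | rfl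
      · left; omega
      · right; left; omega
      · right; right; omega
    rcases hcase with hcc | hcc | hcc <;> rw [hcc] <;>
      linarith [Jw_rpow_pos (k - a) e, Jw_rpow_pos ((k - N) - a) e, Jw_rpow_pos ((k + N) - a) e]
  have hgen : ∀ (p q : ℝ) (Cq : ℝ),
      (∀ (S : Finset ℤ) (k' : ℤ), ∑ a ∈ S, Jw a ^ (-p) * Jw (k' - a) ^ (-q) ≤ Cq) →
      ∑ a ∈ T, Jw a ^ (-p) * Jw (Int.bmod (k-a) N) ^ (-q) ≤ 3 * Cq := by
    intro p q Cq hCq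
    calc ∑ a ∈ T, Jw a ^ (-p) * Jw (Int.bmod (k-a) N) ^ (-q)
        ≤ ∑ a ∈ T, (Jw a ^ (-p) * Jw (k - a) ^ (-q) + Jw a ^ (-p) * Jw ((k - N) - a) ^ (-q)
            + Jw a ^ (-p) * Jw ((k + N) - a) ^ (-q)) := by
          refine Finset.sum_le_sum fun a haT => ?_
          have h := hsplit (-q) a haT
          nlinarith [Jw_rpow_pos a (-p), Jw_rpow_pos (Int.bmod (k-a) N) (-q)]
      _ = (∑ a ∈ T, Jw a ^ (-p) * Jw (k - a) ^ (-q))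
            + (∑ a ∈ T, Jw a ^ (-p) * Jw ((k - N) - a) ^ (-q))
            + (∑ a ∈ T, Jw a ^ (-p) * Jw ((k + N) - a) ^ (-q)) := by
          rw [Finset.sum_add_distrib, Finset.sum_add_distrib]
      _ ≤ 3 * Cq := by
          have g1 := hCq T k
          have g2 := hCq T (k - N)
          have g3 := hCq T (k + N)
          linarith
  have hS1 := hgen (α - γ) β C₁ hC₁
  have hS2 := hgen α (β - γ) C₂ hC₂
  calc ∑ a ∈ T, (1 + lamd N k.natAbs) ^ γ * ((1 + lamd N a.natAbs) ^ α)⁻¹ *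
        ((1 + lamd N (Int.bmod (k - a) N).natAbs) ^ β)⁻¹
      ≤ ∑ a ∈ T, 8 * Real.pi^2 * ((Jw a ^ (-(α - γ)) * Jw (Int.bmod (k-a) N) ^ (-β))
          + (Jw a ^ (-α) * Jw (Int.bmod (k-a) N) ^ (-(β - γ)))) :=
        Finset.sum_le_sum hterm
    _ = 8 * Real.pi^2 * ((∑ a ∈ T, Jw a ^ (-(α - γ)) * Jw (Int.bmod (k-a) N) ^ (-β))
          + ∑ a ∈ T, Jw a ^ (-α) * Jw (Int.bmod (k-a) N) ^ (-(β - γ))) := by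
        rw [← Finset.mul_sum, Finset.sum_add_distrib]
    _ ≤ 8 * Real.pi^2 * (3 * C₁ + 3 * C₂) := by
        have hs1nn : (0:ℝ) ≤ ∑ a ∈ T, Jw a ^ (-(α - γ)) * Jw (Int.bmod (k-a) N) ^ (-β) :=
          Finset.sum_nonneg fun a _ =>
            mul_nonneg (Jw_rpow_pos _ _).le (Jw_rpow_pos _ _).le
        nlinarith


lemma one_add_lamd_pos' (N m : ℕ) : 0 < 1 + lamd N m := by linarith [lamd_nonneg N m]

lemma wpos (N : ℕ) (s : ℝ) (k : ℤ) : 0 < (1 + lamd N k.natAbs) ^ s :=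
  Real.rpow_pos_of_pos (one_add_lamd_pos' N _) s

lemma sobNormSq_nonneg (N : ℕ) (s : ℝ) (f : Fin N → ℝ) : 0 ≤ sobNormSq N s f := by
  refine Finset.sum_nonneg fun m _ => ?_
  have h1 : (0:ℝ) ≤ (1 + lamd N m) ^ s := (Real.rpow_pos_of_pos (one_add_lamd_pos' N m) s).le
  nlinarith [sq_nonneg (ip N f (phiN N m)), sq_nonneg (ip N f (psiN N m))]

set_option maxHeartbeats 2000000 in
lemma key_estimate (α β γ : ℝ) (K : ℝ)
    (hK : ∀ N M : ℕ, N = 2 * M + 1 → ∀ k ∈ Finset.Icc (-(M:ℤ)) M,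
      ∑ a ∈ Finset.Icc (-(M:ℤ)) M,
        (1 + lamd N k.natAbs) ^ γ * ((1 + lamd N a.natAbs) ^ α)⁻¹ *
          ((1 + lamd N (Int.bmod (k - a) N).natAbs) ^ β)⁻¹ ≤ K)
    (N M : ℕ) (hNM : N = 2 * M + 1) (u v : Fin N → ℝ) :
    sobNormSq N γ (fun j => u j * v j) ≤ K * (sobNormSq N α u * sobNormSq N β v) := by
  have hN : 0 < N := by omega
  set T := Finset.Icc (-(M:ℤ)) M with hT
  set y : ℤ → ℤ → ℤ := fun k a => Int.bmod (k - a) N with hy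
  -- the Cauchy-Schwarz step, for each k
  have hCS : ∀ k ∈ T, (1 + lamd N k.natAbs) ^ γ * Complex.normSq (ck N (fun j => u j * v j) k)
      ≤ K * ∑ a ∈ T, ((1 + lamd N a.natAbs) ^ α * Complex.normSq (ck N u a)) *
          ((1 + lamd N (y k a).natAbs) ^ β * Complex.normSq (ck N v (y k a))) := by
    intro k hk
    set wk := (1 + lamd N k.natAbs) ^ γ with hwk
    have hwkpos : 0 < wk := wpos N γ k
    -- triangle inequality
    have habs : ‖ck N (fun j => u j * v j) k‖
        ≤ ∑ a ∈ T, ‖ck N u a‖ * ‖ck N v (y k a)‖ := by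
      rw [ck_conv N M hNM u v k]
      refine le_trans (norm_sum_le _ _) (le_of_eq ?_)
      refine Finset.sum_congr rfl fun a _ => ?_
      rw [norm_mul]
      have hdv : (N:ℤ) ∣ (k - a) - y k a := by
        have h0 := Int.dvd_bmod_sub_self (x := k - a) (m := N)
        have he : (k - a) - y k a = -(Int.bmod (k-a) N - (k - a)) := by
          simp only [hy]
          ring
        rw [he]
        exact dvd_neg.mpr h0
      rw [ck_congr N hN v hdv]
    -- Cauchy-Schwarz with square roots
    set f : ℤ → ℝ := fun a =>
      Real.sqrt (wk * ((1 + lamd N a.natAbs) ^ α)⁻¹ * ((1 + lamd N (y k a).natAbs) ^ β)⁻¹)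
      with hf
    set g : ℤ → ℝ := fun a =>
      Real.sqrt ((1 + lamd N a.natAbs) ^ α * Complex.normSq (ck N u a) *
        ((1 + lamd N (y k a).natAbs) ^ β * Complex.normSq (ck N v (y k a)))) with hg
    have hfg : ∀ a ∈ T, f a * g a
        = Real.sqrt wk * (‖ck N u a‖ * ‖ck N v (y k a)‖) := by
      intro a _
      have hA := wpos N α a
      have hB := wpos N β (y k a)
      have hAne : ((1 + lamd N a.natAbs) ^ α) ≠ 0 := hA.ne'
      have hBne : ((1 + lamd N (y k a).natAbs) ^ β) ≠ 0 := hB.ne'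
      rw [hf, hg, ← Real.sqrt_mul
        (mul_nonneg (mul_nonneg hwkpos.le (inv_pos.mpr hA).le) (inv_pos.mpr hB).le)]
      have harg : wk * ((1 + lamd N a.natAbs) ^ α)⁻¹ * ((1 + lamd N (y k a).natAbs) ^ β)⁻¹ *
          ((1 + lamd N a.natAbs) ^ α * Complex.normSq (ck N u a) *
            ((1 + lamd N (y k a).natAbs) ^ β * Complex.normSq (ck N v (y k a))))
          = wk * (Complex.normSq (ck N u a) * Complex.normSq (ck N v (y k a))) := by
        field_simp
      rw [harg]
      rw [Real.sqrt_mul hwkpos.le]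
      congr 1
      rw [← Complex.sq_norm, ← Complex.sq_norm, ← mul_pow]
      rw [Real.sqrt_sq (by positivity)]
    have hCS0 : (∑ a ∈ T, f a * g a)^2 ≤ (∑ a ∈ T, (f a)^2) * (∑ a ∈ T, (g a)^2) :=
      Finset.sum_mul_sq_le_sq_mul_sq T f g
    have hf2 : ∑ a ∈ T, (f a)^2 = ∑ a ∈ T,
        wk * ((1 + lamd N a.natAbs) ^ α)⁻¹ * ((1 + lamd N (y k a).natAbs) ^ β)⁻¹ := by
      refine Finset.sum_congr rfl fun a _ => ?_
      rw [hf, Real.sq_sqrt]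
      have h1 := wpos N α a
      have h2 := wpos N β (y k a)
      positivity
    have hg2 : ∑ a ∈ T, (g a)^2 = ∑ a ∈ T,
        ((1 + lamd N a.natAbs) ^ α * Complex.normSq (ck N u a)) *
          ((1 + lamd N (y k a).natAbs) ^ β * Complex.normSq (ck N v (y k a))) := by
      refine Finset.sum_congr rfl fun a _ => ?_
      rw [hg, Real.sq_sqrt]
      have h1 := (wpos N α a).le
      have h2 := (wpos N β (y k a)).le
      have h3 := Complex.normSq_nonneg (ck N u a)
      have h4 := Complex.normSq_nonneg (ck N v (y k a))
      positivity
    have hg2nn : 0 ≤ ∑ a ∈ T, (g a)^2 := Finset.sum_nonneg fun a _ => sq_nonneg _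
    -- combine
    calc wk * Complex.normSq (ck N (fun j => u j * v j) k)
        = wk * (‖ck N (fun j => u j * v j) k‖)^2 := by rw [Complex.sq_norm]
      _ ≤ wk * (∑ a ∈ T, ‖ck N u a‖ * ‖ck N v (y k a)‖)^2 := by
          apply mul_le_mul_of_nonneg_left _ hwkpos.le
          apply pow_le_pow_left₀ (norm_nonneg _) habs
      _ = (Real.sqrt wk * ∑ a ∈ T, ‖ck N u a‖ * ‖ck N v (y k a)‖)^2 := by
          rw [mul_pow, Real.sq_sqrt hwkpos.le]
      _ = (∑ a ∈ T, f a * g a)^2 := by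
          rw [Finset.mul_sum]
          congr 1
          exact (Finset.sum_congr rfl hfg).symm
      _ ≤ (∑ a ∈ T, (f a)^2) * (∑ a ∈ T, (g a)^2) := hCS0
      _ ≤ K * ∑ a ∈ T, ((1 + lamd N a.natAbs) ^ α * Complex.normSq (ck N u a)) *
            ((1 + lamd N (y k a).natAbs) ^ β * Complex.normSq (ck N v (y k a))) := by
          rw [hg2]
          apply mul_le_mul_of_nonneg_right _ (hg2 ▸ hg2nn)
          rw [hf2]
          exact hK N M hNM k hk
  -- sum over k and swap
  rw [sob_eq N M hNM γ, sob_eq N M hNM α, sob_eq N M hNM β]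
  calc ∑ k ∈ T, (1 + lamd N k.natAbs) ^ γ * Complex.normSq (ck N (fun j => u j * v j) k)
      ≤ ∑ k ∈ T, K * ∑ a ∈ T, ((1 + lamd N a.natAbs) ^ α * Complex.normSq (ck N u a)) *
          ((1 + lamd N (y k a).natAbs) ^ β * Complex.normSq (ck N v (y k a))) :=
        Finset.sum_le_sum hCS
    _ = K * ∑ a ∈ T, ((1 + lamd N a.natAbs) ^ α * Complex.normSq (ck N u a)) *
          ∑ k ∈ T, ((1 + lamd N (y k a).natAbs) ^ β * Complex.normSq (ck N v (y k a))) := by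
        rw [← Finset.mul_sum]
        congr 1
        rw [Finset.sum_comm]
        refine Finset.sum_congr rfl fun a _ => ?_
        rw [Finset.mul_sum]
    _ = K * ∑ a ∈ T, ((1 + lamd N a.natAbs) ^ α * Complex.normSq (ck N u a)) *
          ∑ b ∈ T, ((1 + lamd N b.natAbs) ^ β * Complex.normSq (ck N v b)) := by
        congr 1
        refine Finset.sum_congr rfl fun a _ => ?_
        congr 1
        refine Finset.sum_nbij' (fun k => y k a) (fun b => Int.bmod (b + a) N)
          (fun k _ => bmod_range N M hNM _) (fun b _ => bmod_range N M hNM _)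
          ?_ ?_ (fun k _ => rfl)
        · intro k hkT
          show Int.bmod (y k a + a) N = k
          have h1 : Int.bmod (y k a + a) N = Int.bmod k N := by
            apply bmod_congr_of_dvd N hN
            have h0 := Int.dvd_bmod_sub_self (x := k - a) (m := N)
            have : y k a + a - k = Int.bmod (k-a) N - (k - a) := by simp [hy]; ring
            rw [this]
            exact h0
          rw [h1, bmod_eq_self N M hNM hkT]
        · intro b hbT
          show y (Int.bmod (b + a) N) a = b
          have h1 : y (Int.bmod (b + a) N) a = Int.bmod b N := by
            simp only [hy]
            apply bmod_congr_of_dvd N hN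
            have h0 := Int.dvd_bmod_sub_self (x := b + a) (m := N)
            have : Int.bmod (b+a) N - a - b = Int.bmod (b+a) N - (b + a) := by ring
            rw [this]
            exact h0
          rw [h1, bmod_eq_self N M hNM hbT]
    _ = K * ((∑ a ∈ T, (1 + lamd N a.natAbs) ^ α * Complex.normSq (ck N u a)) *
          ∑ b ∈ T, (1 + lamd N b.natAbs) ^ β * Complex.normSq (ck N v b)) := by
        rw [Finset.sum_mul]



set_option maxHeartbeats 1000000 in
/-- Product rule in positive discrete Sobolev spaces: if `0 ≤ α, β, γ ≤ 1` and either
(i) `1/2 < max(α,β) ≤ 1` and `γ < min(α,β)`, or (ii) `max(α,β) ≤ 1/2` and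
`γ < α + β - 1/2`, then `‖uv‖_{H_N^γ} ≤ C ‖u‖_{H_N^α} ‖v‖_{H_N^β}` uniformly in odd `N`. -/
theorem stmt_10 (α β γ : ℝ) (hα0 : 0 ≤ α) (hα1 : α ≤ 1) (hβ0 : 0 ≤ β) (hβ1 : β ≤ 1)
    (hγ0 : 0 ≤ γ) (hγ1 : γ ≤ 1)
    (h : (1/2 < max α β ∧ max α β ≤ 1 ∧ γ < min α β) ∨
         (max α β ≤ 1/2 ∧ γ < α + β - 1/2)) :
    ∃ C : ℝ, 0 < C ∧ ∀ N : ℕ, Odd N → 1 ≤ N → ∀ u v : Fin N → ℝ,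
      sobNorm N γ (fun j => u j * v j) ≤ C * sobNorm N α u * sobNorm N β v := by
  have hmm : min α β + max α β = α + β := min_add_max α β
  have hga : γ < α := by
    rcases h with ⟨h1, h2, h3⟩ | ⟨h1, h2⟩
    · exact lt_of_lt_of_le h3 (min_le_left α β)
    · have hb : β ≤ 1/2 := le_trans (le_max_right α β) h1
      linarith
  have hgb : γ < β := by
    rcases h with ⟨h1, h2, h3⟩ | ⟨h1, h2⟩
    · exact lt_of_lt_of_le h3 (min_le_right α β)
    · have ha : α ≤ 1/2 := le_trans (le_max_left α β) h1
      linarith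
  have hsum : 1/2 < α + β - γ := by
    rcases h with ⟨h1, h2, h3⟩ | ⟨h1, h2⟩
    · linarith
    · linarith
  obtain ⟨K, hKpos, hK⟩ := sup_bound α β γ hα0 hβ0 hγ0 hγ1 hga hgb hsum
  refine ⟨Real.sqrt K, Real.sqrt_pos.mpr hKpos, ?_⟩
  intro N hodd hN1 u v
  obtain ⟨M, hM⟩ : ∃ M : ℕ, N = 2 * M + 1 := by
    rcases hodd with ⟨m, hm⟩
    exact ⟨m, by omega⟩
  have key := key_estimate α β γ K hK N M hM u v
  rw [sobNorm, sobNorm, sobNorm]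
  have h1 : Real.sqrt (sobNormSq N γ (fun j => u j * v j))
      ≤ Real.sqrt (K * (sobNormSq N α u * sobNormSq N β v)) := Real.sqrt_le_sqrt key
  calc Real.sqrt (sobNormSq N γ (fun j => u j * v j))
      ≤ Real.sqrt (K * (sobNormSq N α u * sobNormSq N β v)) := h1
    _ = Real.sqrt K * (Real.sqrt (sobNormSq N α u) * Real.sqrt (sobNormSq N β v)) := by
        rw [Real.sqrt_mul hKpos.le, Real.sqrt_mul (sobNormSq_nonneg N α u)]
    _ = Real.sqrt K * Real.sqrt (sobNormSq N α u) * Real.sqrt (sobNormSq N β v) := by ring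


end
end

section
/- The trigonometric interpolation I_N is uniformly bi-continuous for Sobolev norms: for every 0 ≤ β ≤ 1 there exists c > 0 independent of N such that for all u ∈ H_N, c⁻¹ ‖I_N(u)‖_{H^β} ≤ ‖u‖_{H_N^β} ≤ c ‖I_N(u)‖_{H^β}. -/
/-- Discrete Fourier coefficient `û(k) = (1/N) Σ_l u(l/N) e^{-2πi l k / N}`. -/
noncomputable def dft (N : ℕ) (u : Fin N → ℝ) (k : ℤ) : ℂ :=
  (1 / (N : ℂ)) * ∑ l : Fin N,
    (u l : ℂ) * Complex.exp (-2 * Real.pi * Complex.I * (l : ℕ) * k / N)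

/-- Square of the continuous periodic Sobolev norm `‖I_N(u)‖²_{H^β}` of the trigonometric
interpolation `I_N(u)(x) = Σ_{|k| ≤ (N-1)/2} û(k) e^{2πikx}`, expressed via Parseval. -/
noncomputable def interpNormSq (N : ℕ) (β : ℝ) (u : Fin N → ℝ) : ℝ :=
  ∑ k ∈ Finset.Icc (-(((N : ℤ) - 1) / 2)) (((N : ℤ) - 1) / 2),
    (1 + (2 * Real.pi * (k : ℝ))^2) ^ β * ‖dft N u k‖^2

noncomputable def Acoef (N : ℕ) (u : Fin N → ℝ) (k : ℤ) : ℝ :=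
  (1 / (N : ℝ)) * ∑ l : Fin N, u l * Real.cos (2 * Real.pi * (l : ℕ) * k / N)
noncomputable def Bcoef (N : ℕ) (u : Fin N → ℝ) (k : ℤ) : ℝ :=
  (1 / (N : ℝ)) * ∑ l : Fin N, u l * Real.sin (2 * Real.pi * (l : ℕ) * k / N)

lemma dft_eq (N : ℕ) (u : Fin N → ℝ) (k : ℤ) :
    dft N u k = (Acoef N u k : ℂ) - (Bcoef N u k : ℂ) * Complex.I := by
  unfold dft Acoef Bcoef
  push_cast
  rw [Finset.mul_sum, Finset.mul_sum, Finset.mul_sum, Finset.sum_mul, ← Finset.sum_sub_distrib]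
  refine Finset.sum_congr rfl fun l _ => ?_
  have h : (-2 * (Real.pi:ℂ) * Complex.I * ((l:ℕ):ℂ) * ((k:ℤ):ℂ) / ((N:ℕ):ℂ))
      = (-(2 * (Real.pi:ℂ) * ((l:ℕ):ℂ) * ((k:ℤ):ℂ) / ((N:ℕ):ℂ))) * Complex.I := by
    ring
  rw [h, Complex.exp_mul_I, Complex.cos_neg, Complex.sin_neg]
  ring

lemma norm_dft_sq (N : ℕ) (u : Fin N → ℝ) (k : ℤ) :
    ‖dft N u k‖^2 = (Acoef N u k)^2 + (Bcoef N u k)^2 := by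
  rw [dft_eq]
  rw [Complex.sq_norm, Complex.normSq_apply]
  simp
  ring

lemma norm_dft_neg (N : ℕ) (u : Fin N → ℝ) (k : ℤ) :
    ‖dft N u (-k)‖^2 = ‖dft N u k‖^2 := by
  rw [norm_dft_sq, norm_dft_sq]
  have hA : Acoef N u (-k) = Acoef N u k := by
    unfold Acoef
    refine congrArg _ (Finset.sum_congr rfl fun l _ => ?_)
    push_cast
    rw [show 2 * Real.pi * (l:ℕ) * (-(k:ℝ)) / (N:ℕ) = -(2 * Real.pi * (l:ℕ) * (k:ℝ) / (N:ℕ)) by ring,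
      Real.cos_neg]
  have hB : Bcoef N u (-k) = - Bcoef N u k := by
    unfold Bcoef
    rw [← mul_neg, ← Finset.sum_neg_distrib]
    refine congrArg _ (Finset.sum_congr rfl fun l _ => ?_)
    push_cast
    rw [show 2 * Real.pi * (l:ℕ) * (-(k:ℝ)) / (N:ℕ) = -(2 * Real.pi * (l:ℕ) * (k:ℝ) / (N:ℕ)) by ring,
      Real.sin_neg]
    ring
  rw [hA, hB]
  ring

lemma S_eq (N : ℕ) (u : Fin N → ℝ) (m : ℕ) :
    (ip N u (phiN N m))^2 + (ip N u (psiN N m))^2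
      = (if m = 0 then 1 else 2) * ‖dft N u (m:ℤ)‖^2 := by
  rw [norm_dft_sq]
  have hA : ip N u (phiN N m)
      = (if m = 0 then 1 else Real.sqrt 2) * Acoef N u (m:ℤ) := by
    unfold ip phiN Acoef
    by_cases hm : m = 0
    · simp [hm]
    · simp only [hm, if_false]
      rw [Finset.mul_sum, Finset.mul_sum, Finset.mul_sum]
      refine Finset.sum_congr rfl fun l _ => ?_
      push_cast
      ring
  have hB : ip N u (psiN N m) = Real.sqrt 2 * Bcoef N u (m:ℤ) := by
    unfold ip psiN Bcoef
    rw [Finset.mul_sum, Finset.mul_sum, Finset.mul_sum]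
    refine Finset.sum_congr rfl fun l _ => ?_
    push_cast
    ring
  rw [hA, hB]
  have hs2 : Real.sqrt 2 ^ 2 = 2 := Real.sq_sqrt (by norm_num)
  by_cases hm : m = 0
  · subst hm
    have hB0 : Bcoef N u ((0:ℕ):ℤ) = 0 := by
      unfold Bcoef; simp
    rw [hB0]
    norm_num
  · simp only [hm, if_false]
    rw [mul_pow, mul_pow, hs2]
    ring

lemma sum_Icc_even (f : ℤ → ℝ) (hf : ∀ k, f (-k) = f k) (M : ℕ) :
    ∑ k ∈ Finset.Icc (-(M:ℤ)) (M:ℤ), f k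
      = ∑ m ∈ Finset.range (M+1), (if m = 0 then 1 else 2) * f (m:ℤ) := by
  induction M with
  | zero => simp
  | succ M ih =>
    have hset : Finset.Icc (-((M:ℤ)+1)) ((M:ℤ)+1)
        = insert (-((M:ℤ)+1)) (insert ((M:ℤ)+1) (Finset.Icc (-(M:ℤ)) (M:ℤ))) := by
      ext k
      simp only [Finset.mem_Icc, Finset.mem_insert]
      omega
    have h1 : ((M:ℤ)+1) ∉ Finset.Icc (-(M:ℤ)) (M:ℤ) := by
      simp only [Finset.mem_Icc]; omega
    have h2 : (-((M:ℤ)+1)) ∉ insert ((M:ℤ)+1) (Finset.Icc (-(M:ℤ)) (M:ℤ)) := by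
      simp only [Finset.mem_insert, Finset.mem_Icc]; omega
    have hcast : ((M+1:ℕ):ℤ) = (M:ℤ)+1 := by push_cast; ring
    rw [hcast, hset, Finset.sum_insert h2, Finset.sum_insert h1, ih, hf,
      Finset.sum_range_succ _ (M+1), hcast]
    simp only [Nat.succ_ne_zero, if_false]
    ring

lemma lamd_bounds (N m : ℕ) (hN : 1 ≤ N) (hm : 2 * m ≤ N) :
    (4 / Real.pi^2) * (1 + (2*Real.pi*(m:ℝ))^2) ≤ 1 + lamd N m
      ∧ 1 + lamd N m ≤ 1 + (2*Real.pi*(m:ℝ))^2 := by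
  have hNpos : (0:ℝ) < N := by positivity
  set t : ℝ := Real.pi * m / N with ht
  have ht0 : 0 ≤ t := by positivity
  have htle : t ≤ Real.pi / 2 := by
    rw [ht, div_le_div_iff₀ hNpos (by norm_num)]
    have : (2:ℝ) * m ≤ N := by exact_mod_cast hm
    nlinarith [Real.pi_pos]
  have hlam : lamd N m = 4 * (N:ℝ)^2 * Real.sin t ^ 2 := by
    unfold lamd
    rw [show 2 * Real.pi * (m:ℝ) / N = 2 * t by rw [ht]; ring,
      Real.sin_sq_eq_half_sub]
    ring
  have hsin_le : Real.sin t ≤ t := Real.sin_le ht0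
  have hsin_nonneg : 0 ≤ Real.sin t :=
    Real.sin_nonneg_of_nonneg_of_le_pi ht0 (le_trans htle (by linarith [Real.pi_pos]))
  have hsin_ge : 2 / Real.pi * t ≤ Real.sin t := Real.mul_le_sin ht0 htle
  have htval : (N:ℝ) * t = Real.pi * m := by
    rw [ht]; field_simp
  have hpi : Real.pi > 3 := Real.pi_gt_three
  constructor
  · -- lower bound: 4/π² + 16m² ≤ 1 + λ, using λ ≥ 16m²
    have h2t : 2 / Real.pi * t = 2 * (m:ℝ) / N := by
      rw [ht]; field_simp
    rw [h2t] at hsin_ge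
    have hmul := mul_le_mul_of_nonneg_left
      (mul_le_mul hsin_ge hsin_ge (by positivity) hsin_nonneg)
      (by positivity : (0:ℝ) ≤ 4 * (N:ℝ)^2)
    have hq : 4 * (N:ℝ)^2 * (2*(m:ℝ)/N * (2*(m:ℝ)/N)) = 16 * (m:ℝ)^2 := by
      field_simp; ring
    have h16 : 16 * (m:ℝ)^2 ≤ lamd N m := by
      rw [hlam]; nlinarith [hmul, hq]
    have hpi2 : (4:ℝ) / Real.pi^2 ≤ 1 := by
      rw [div_le_one (by positivity)]; nlinarith
    have heq : (4 / Real.pi^2) * (1 + (2*Real.pi*(m:ℝ))^2) = 4/Real.pi^2 + 16 * m^2 := by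
      field_simp; ring
    rw [heq]
    linarith
  · have hmul2 := mul_le_mul_of_nonneg_left
      (mul_le_mul hsin_le hsin_le hsin_nonneg ht0)
      (by positivity : (0:ℝ) ≤ 4 * (N:ℝ)^2)
    have hq2 : 4 * (N:ℝ)^2 * (t * t) = (2*Real.pi*(m:ℝ))^2 := by
      rw [ht]; field_simp; ring
    have : lamd N m ≤ (2*Real.pi*(m:ℝ))^2 := by
      rw [hlam]; nlinarith [hmul2, hq2]
    linarith


/-- The trigonometric interpolation `I_N` is uniformly bi-continuous for Sobolev norms:
for `0 ≤ β ≤ 1`, `c⁻¹ ‖I_N(u)‖_{H^β} ≤ ‖u‖_{H_N^β} ≤ c ‖I_N(u)‖_{H^β}` with `c`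
independent of (odd) `N`. -/
theorem stmt_12 (β : ℝ) (hβ0 : 0 ≤ β) (hβ1 : β ≤ 1) :
    ∃ c : ℝ, 0 < c ∧ ∀ N : ℕ, Odd N → 1 ≤ N → ∀ u : Fin N → ℝ,
      c⁻¹ * Real.sqrt (interpNormSq N β u) ≤ sobNorm N β u ∧
      sobNorm N β u ≤ c * Real.sqrt (interpNormSq N β u) := by
  refine ⟨Real.pi / 2, by positivity, fun N hNodd hN1 u => ?_⟩
  set M : ℕ := (N - 1) / 2 with hM
  -- rewrite interpNormSq as a sum over range (M+1)
  have hMcast : (((N:ℤ) - 1) / 2) = (M : ℤ) := by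
    obtain ⟨j, hj⟩ := hNodd
    have : N = 2 * j + 1 := by omega
    subst this
    have : M = j := by omega
    rw [this]
    push_cast
    omega
  have hint : interpNormSq N β u
      = ∑ m ∈ Finset.range (M+1),
          (if m = 0 then 1 else 2) * ((1 + (2*Real.pi*(m:ℝ))^2)^β * ‖dft N u (m:ℤ)‖^2) := by
    unfold interpNormSq
    rw [hMcast]
    have heven : ∀ k : ℤ, (1 + (2*Real.pi*((-k : ℤ):ℝ))^2)^β * ‖dft N u (-k)‖^2
        = (1 + (2*Real.pi*(k:ℝ))^2)^β * ‖dft N u k‖^2 := by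
      intro k
      rw [norm_dft_neg]
      push_cast
      rw [show 2*Real.pi*(-(k:ℝ)) = -(2*Real.pi*(k:ℝ)) by ring, neg_sq]
    exact sum_Icc_even (fun k => (1 + (2*Real.pi*(k:ℝ))^2)^β * ‖dft N u k‖^2) heven M
  have hsob : sobNormSq N β u
      = ∑ m ∈ Finset.range (M+1),
          (1 + lamd N m)^β * ((if m = 0 then 1 else 2) * ‖dft N u (m:ℤ)‖^2) := by
    unfold sobNormSq
    exact Finset.sum_congr rfl fun m _ => by rw [S_eq]
  -- termwise bounds
  have hterm : ∀ m ∈ Finset.range (M+1),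
      (4 / Real.pi^2) * ((if m = 0 then 1 else 2) * ((1 + (2*Real.pi*(m:ℝ))^2)^β * ‖dft N u (m:ℤ)‖^2))
        ≤ (1 + lamd N m)^β * ((if m = 0 then 1 else 2) * ‖dft N u (m:ℤ)‖^2)
      ∧ (1 + lamd N m)^β * ((if m = 0 then 1 else 2) * ‖dft N u (m:ℤ)‖^2)
        ≤ (if m = 0 then 1 else 2) * ((1 + (2*Real.pi*(m:ℝ))^2)^β * ‖dft N u (m:ℤ)‖^2) := by
    intro m hmr
    have hm : 2 * m ≤ N := by
      rw [Finset.mem_range] at hmr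
      omega
    obtain ⟨hlo, hhi⟩ := lamd_bounds N m hN1 hm
    have hWpos : (0:ℝ) < 1 + (2*Real.pi*(m:ℝ))^2 := by positivity
    have hLpos : (0:ℝ) < 1 + lamd N m := by
      have : (0:ℝ) < (4 / Real.pi^2) * (1 + (2*Real.pi*(m:ℝ))^2) := by positivity
      linarith
    have hup : (1 + lamd N m)^β ≤ (1 + (2*Real.pi*(m:ℝ))^2)^β :=
      Real.rpow_le_rpow hLpos.le hhi hβ0
    have hlow : (4 / Real.pi^2) * (1 + (2*Real.pi*(m:ℝ))^2)^β ≤ (1 + lamd N m)^β := by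
      have h1 : ((4 / Real.pi^2) * (1 + (2*Real.pi*(m:ℝ))^2))^β ≤ (1 + lamd N m)^β :=
        Real.rpow_le_rpow (by positivity) hlo hβ0
      have h2 : ((4 / Real.pi^2) * (1 + (2*Real.pi*(m:ℝ))^2))^β
          = (4 / Real.pi^2)^β * (1 + (2*Real.pi*(m:ℝ))^2)^β :=
        Real.mul_rpow (by positivity) hWpos.le
      have h3 : (4 / Real.pi^2) ≤ (4 / Real.pi^2)^β := by
        have hb1 : (4:ℝ) / Real.pi^2 ≤ 1 := by
          rw [div_le_one (by positivity)]
          nlinarith [Real.pi_gt_three]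
        calc (4:ℝ) / Real.pi^2 = (4 / Real.pi^2)^(1:ℝ) := (Real.rpow_one _).symm
          _ ≤ (4 / Real.pi^2)^β := Real.rpow_le_rpow_of_exponent_ge (by positivity) hb1 hβ1
      calc (4 / Real.pi^2) * (1 + (2*Real.pi*(m:ℝ))^2)^β
          ≤ (4 / Real.pi^2)^β * (1 + (2*Real.pi*(m:ℝ))^2)^β := by
            apply mul_le_mul_of_nonneg_right h3 (Real.rpow_nonneg hWpos.le β)
        _ = ((4 / Real.pi^2) * (1 + (2*Real.pi*(m:ℝ))^2))^β := h2.symm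
        _ ≤ (1 + lamd N m)^β := h1
    have hcoef : (0:ℝ) ≤ (if m = 0 then 1 else 2) * ‖dft N u (m:ℤ)‖^2 := by
      positivity
    constructor
    · calc (4 / Real.pi^2) * ((if m = 0 then 1 else 2) * ((1 + (2*Real.pi*(m:ℝ))^2)^β * ‖dft N u (m:ℤ)‖^2))
          = ((4 / Real.pi^2) * (1 + (2*Real.pi*(m:ℝ))^2)^β) * ((if m = 0 then 1 else 2) * ‖dft N u (m:ℤ)‖^2) := by ring
        _ ≤ (1 + lamd N m)^β * ((if m = 0 then 1 else 2) * ‖dft N u (m:ℤ)‖^2) :=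
            mul_le_mul_of_nonneg_right hlow hcoef
    · calc (1 + lamd N m)^β * ((if m = 0 then 1 else 2) * ‖dft N u (m:ℤ)‖^2)
          ≤ (1 + (2*Real.pi*(m:ℝ))^2)^β * ((if m = 0 then 1 else 2) * ‖dft N u (m:ℤ)‖^2) :=
            mul_le_mul_of_nonneg_right hup hcoef
        _ = (if m = 0 then 1 else 2) * ((1 + (2*Real.pi*(m:ℝ))^2)^β * ‖dft N u (m:ℤ)‖^2) := by ring
  have hIle : (4 / Real.pi^2) * interpNormSq N β u ≤ sobNormSq N β u := by
    rw [hint, hsob, Finset.mul_sum]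
    exact Finset.sum_le_sum fun m hmr => (hterm m hmr).1
  have hSle : sobNormSq N β u ≤ interpNormSq N β u := by
    rw [hint, hsob]
    exact Finset.sum_le_sum fun m hmr => (hterm m hmr).2
  have hInn : 0 ≤ interpNormSq N β u := by
    rw [hint]
    refine Finset.sum_nonneg fun m _ => ?_
    have : (0:ℝ) ≤ (1 + (2*Real.pi*(m:ℝ))^2)^β := Real.rpow_nonneg (by positivity) β
    positivity
  constructor
  · have h1 : Real.sqrt ((4 / Real.pi^2) * interpNormSq N β u) ≤ sobNorm N β u :=
      Real.sqrt_le_sqrt hIle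
    have h2 : Real.sqrt ((4 / Real.pi^2) * interpNormSq N β u)
        = (2 / Real.pi) * Real.sqrt (interpNormSq N β u) := by
      rw [Real.sqrt_mul (by positivity)]
      congr 1
      rw [show (4:ℝ) / Real.pi^2 = (2/Real.pi)^2 by ring]
      exact Real.sqrt_sq (by positivity)
    have h3 : (Real.pi / 2)⁻¹ = 2 / Real.pi := by
      field_simp
    rw [h3, ← h2]
    exact h1
  · have h1 : sobNorm N β u ≤ Real.sqrt (interpNormSq N β u) := Real.sqrt_le_sqrt hSle
    have h2 : Real.sqrt (interpNormSq N β u) ≤ (Real.pi/2) * Real.sqrt (interpNormSq N β u) := by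
      nlinarith [Real.sqrt_nonneg (interpNormSq N β u), Real.pi_gt_three]
    linarith
end

section
/- Let ρ ≥ 0 be smooth, even, compactly supported in (-1/2,1/2) with ∫ρ = 1, ρ^ε(y) = ε⁻¹ρ(y/ε), and ρ^{ε,N} = P_N ρ^ε its projection to H_N. Then for every φ ∈ H_N, every ε > 0 and every α ∈ [-1,1], the discrete convolution satisfies ‖ρ^{ε,N} *_N φ‖_{H_N^α} ≤ ‖φ‖_{H_N^α}. -/
open Finset MeasureTheory


/-- Centered integer index of a cell: identifies `Fin N` with `{-(N-1)/2, …, (N-1)/2}`. -/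
def centIdx (N : ℕ) (k : Fin N) : ℤ :=
  if (k : ℕ) ≤ (N - 1) / 2 then ((k : ℕ) : ℤ) else ((k : ℕ) : ℤ) - (N : ℤ)

/-- The projection `P_N` onto `H_N` by local averaging over the cell
`[(2k-1)/(2N), (2k+1)/(2N))` (centered cells of `[-1/2, 1/2)`). -/
noncomputable def projN (N : ℕ) (f : ℝ → ℝ) : Fin N → ℝ :=
  fun k => (N : ℝ) *
    ∫ y in ((2 * (centIdx N k : ℝ) - 1) / (2 * N))..((2 * (centIdx N k : ℝ) + 1) / (2 * N)), f y

/-- Discrete (periodic, normalized) convolution on `H_N`: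
`(a *_N b)_k = (1/N) Σ_ℓ a_{k-ℓ} b_ℓ`. -/
noncomputable def convN (N : ℕ) [NeZero N] (a b : Fin N → ℝ) : Fin N → ℝ :=
  fun k => (1 / (N : ℝ)) * ∑ l : Fin N, a (k - l) * b l

/-- The rescaled mollifier `ρ^ε(y) = ε⁻¹ ρ(y/ε)`. -/
noncomputable def mollify (ρ : ℝ → ℝ) (ε : ℝ) : ℝ → ℝ := fun y => ε⁻¹ * ρ (y / ε)


lemma trig_nat_mod (F : ℝ → ℝ) (hF : ∀ (x : ℝ) (n : ℤ), F (x + n * (2 * Real.pi)) = F x)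
    (N m n : ℕ) :
    F (2 * Real.pi * m * ((n % N : ℕ) : ℝ) / N) = F (2 * Real.pi * m * n / N) := by
  rcases Nat.eq_zero_or_pos N with h | h
  · simp [h]
  have hN : (N : ℝ) ≠ 0 := Nat.cast_ne_zero.mpr h.ne'
  set q := n / N with hq
  set r := n % N with hr
  have hn : (n : ℝ) = N * q + r := by
    exact_mod_cast congrArg (Nat.cast : ℕ → ℝ) (Nat.div_add_mod n N).symm
  have key : 2 * Real.pi * m * n / N
      = 2 * Real.pi * m * (r : ℝ) / N + ((m * q : ℕ) : ℤ) * (2 * Real.pi) := by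
    push_cast
    rw [hn]; field_simp; ring
  rw [key, hF]

lemma cos_nat_mod (N m n : ℕ) :
    Real.cos (2 * Real.pi * m * ((n % N : ℕ) : ℝ) / N) = Real.cos (2 * Real.pi * m * n / N) :=
  trig_nat_mod _ Real.cos_add_int_mul_two_pi N m n

lemma sin_nat_mod (N m n : ℕ) :
    Real.sin (2 * Real.pi * m * ((n % N : ℕ) : ℝ) / N) = Real.sin (2 * Real.pi * m * n / N) :=
  trig_nat_mod _ Real.sin_add_int_mul_two_pi N m n


lemma conv_sum (N : ℕ) [NeZero N] (a φ g : Fin N → ℝ) :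
    ∑ k : Fin N, ∑ l : Fin N, a (k - l) * φ l * g k
      = ∑ l : Fin N, ∑ j : Fin N, a j * φ l * g (j + l) := by
  rw [Finset.sum_comm]
  refine Finset.sum_congr rfl fun l _ => ?_
  exact (Fintype.sum_equiv (Equiv.addRight l) _ _ (fun j => by simp)).symm

lemma double_sub (N : ℕ) (a b v w : Fin N → ℝ) :
    ∑ l : Fin N, ∑ j : Fin N, a j * b l * (v j * v l - w j * w l)
      = (∑ j : Fin N, a j * v j) * (∑ l : Fin N, b l * v l)
        - (∑ j : Fin N, a j * w j) * (∑ l : Fin N, b l * w l) := by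
  rw [Finset.sum_mul_sum, Finset.sum_mul_sum, ← Finset.sum_sub_distrib, Finset.sum_comm]
  refine Finset.sum_congr rfl fun l _ => ?_
  rw [← Finset.sum_sub_distrib]
  exact Finset.sum_congr rfl fun j _ => by ring

lemma double_add (N : ℕ) (a b v w : Fin N → ℝ) :
    ∑ l : Fin N, ∑ j : Fin N, a j * b l * (w j * v l + v j * w l)
      = (∑ j : Fin N, a j * w j) * (∑ l : Fin N, b l * v l)
        + (∑ j : Fin N, a j * v j) * (∑ l : Fin N, b l * w l) := by
  rw [Finset.sum_mul_sum, Finset.sum_mul_sum, ← Finset.sum_add_distrib, Finset.sum_comm]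
  refine Finset.sum_congr rfl fun l _ => ?_
  rw [← Finset.sum_add_distrib]
  exact Finset.sum_congr rfl fun j _ => by ring

lemma ip_conv_expand (N : ℕ) [NeZero N] (a φ g : Fin N → ℝ) :
    ip N (convN N a φ) g = (1/(N:ℝ)) * ((1/(N:ℝ)) * ∑ k : Fin N, ∑ l : Fin N, a (k - l) * φ l * g k) := by
  unfold ip convN
  congr 1
  rw [Finset.mul_sum]
  refine Finset.sum_congr rfl fun k _ => ?_
  rw [mul_assoc, Finset.sum_mul]

section trig
variable (N m : ℕ)

noncomputable def vv : Fin N → ℝ := fun j => Real.cos (2 * Real.pi * m * (j : ℕ) / N)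
noncomputable def ww : Fin N → ℝ := fun j => Real.sin (2 * Real.pi * m * (j : ℕ) / N)

lemma vv_add [NeZero N] (j l : Fin N) :
    vv N m (j + l) = vv N m j * vv N m l - ww N m j * ww N m l := by
  show Real.cos _ = _
  have h1 : ((j + l : Fin N) : ℕ) = (j.val + l.val) % N := by
    simp [Fin.add_def]
  rw [h1, cos_nat_mod]
  have h2 : 2 * Real.pi * m * ((j.val + l.val : ℕ) : ℝ) / N
      = 2 * Real.pi * m * (j : ℕ) / N + 2 * Real.pi * m * (l : ℕ) / N := by
    push_cast; ring
  rw [h2, Real.cos_add]; rfl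

lemma ww_add [NeZero N] (j l : Fin N) :
    ww N m (j + l) = ww N m j * vv N m l + vv N m j * ww N m l := by
  show Real.sin _ = _
  have h1 : ((j + l : Fin N) : ℕ) = (j.val + l.val) % N := by
    simp [Fin.add_def]
  rw [h1, sin_nat_mod]
  have h2 : 2 * Real.pi * m * ((j.val + l.val : ℕ) : ℝ) / N
      = 2 * Real.pi * m * (j : ℕ) / N + 2 * Real.pi * m * (l : ℕ) / N := by
    push_cast; ring
  rw [h2, Real.sin_add]; rfl

lemma ip_conv_vv [NeZero N] (a φ : Fin N → ℝ) :
    ip N (convN N a φ) (vv N m)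
      = ip N a (vv N m) * ip N φ (vv N m) - ip N a (ww N m) * ip N φ (ww N m) := by
  rw [ip_conv_expand, conv_sum]
  have : ∑ l : Fin N, ∑ j : Fin N, a j * φ l * vv N m (j + l)
      = ∑ l : Fin N, ∑ j : Fin N, a j * φ l * (vv N m j * vv N m l - ww N m j * ww N m l) := by
    refine Finset.sum_congr rfl fun l _ => Finset.sum_congr rfl fun j _ => ?_
    rw [vv_add]
  rw [this, double_sub]
  unfold ip
  ring

lemma ip_conv_ww [NeZero N] (a φ : Fin N → ℝ) :
    ip N (convN N a φ) (ww N m)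
      = ip N a (ww N m) * ip N φ (vv N m) + ip N a (vv N m) * ip N φ (ww N m) := by
  rw [ip_conv_expand, conv_sum]
  have : ∑ l : Fin N, ∑ j : Fin N, a j * φ l * ww N m (j + l)
      = ∑ l : Fin N, ∑ j : Fin N, a j * φ l * (ww N m j * vv N m l + vv N m j * ww N m l) := by
    refine Finset.sum_congr rfl fun l _ => Finset.sum_congr rfl fun j _ => ?_
    rw [ww_add]
  rw [this, double_add]
  unfold ip
  ring

lemma vw_sum_bound (a : Fin N → ℝ) (ha : ∀ k, 0 ≤ a k) :
    (∑ j : Fin N, a j * vv N m j)^2 + (∑ j : Fin N, a j * ww N m j)^2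
      ≤ (∑ j : Fin N, a j)^2 := by
  have expand : (∑ j : Fin N, a j * vv N m j)^2 + (∑ j : Fin N, a j * ww N m j)^2
      = ∑ j : Fin N, ∑ k : Fin N, a j * a k * (vv N m j * vv N m k + ww N m j * ww N m k) := by
    rw [pow_two, pow_two, Finset.sum_mul_sum, Finset.sum_mul_sum, ← Finset.sum_add_distrib]
    refine Finset.sum_congr rfl fun j _ => ?_
    rw [← Finset.sum_add_distrib]
    exact Finset.sum_congr rfl fun k _ => by ring
  rw [expand, pow_two, Finset.sum_mul_sum]
  refine Finset.sum_le_sum fun j _ => Finset.sum_le_sum fun k _ => ?_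
  have hcs : vv N m j * vv N m k + ww N m j * ww N m k
      = Real.cos (2 * Real.pi * m * (j : ℕ) / N - 2 * Real.pi * m * (k : ℕ) / N) := by
    rw [Real.cos_sub]; rfl
  have h1 : vv N m j * vv N m k + ww N m j * ww N m k ≤ 1 := hcs ▸ Real.cos_le_one _
  nlinarith [mul_nonneg (ha j) (ha k)]

end trig
variable {ρ : ℝ → ℝ} {ε : ℝ}

lemma mollify_cont (hρ : Continuous ρ) (hε : 0 < ε) : Continuous (mollify ρ ε) := by
  unfold mollify
  exact continuous_const.mul (hρ.comp (continuous_id.div_const ε))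

lemma mollify_nonneg (hρ : ∀ x, 0 ≤ ρ x) (hε : 0 < ε) (y : ℝ) : 0 ≤ mollify ρ ε y :=
  mul_nonneg (inv_nonneg.mpr hε.le) (hρ _)

lemma mollify_integral (hρ : Continuous ρ) (hε : 0 < ε) (hρint : ∫ x : ℝ, ρ x = 1) :
    ∫ x : ℝ, mollify ρ ε x = 1 := by
  unfold mollify
  rw [MeasureTheory.integral_const_mul, MeasureTheory.Measure.integral_comp_div, hρint,
    abs_of_pos hε]
  simp [inv_mul_cancel₀ hε.ne']

lemma mollify_compactSupport (hρsupp : Function.support ρ ⊆ Set.Ioo (-(1/2) : ℝ) (1/2))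
    (hε : 0 < ε) : HasCompactSupport (mollify ρ ε) := by
  apply HasCompactSupport.intro (isCompact_Icc (a := -(ε/2)) (b := ε/2))
  intro x hx
  unfold mollify
  rcases eq_or_ne (ρ (x / ε)) 0 with h | h
  · simp [h]
  · exfalso
    have := hρsupp h
    simp only [Set.mem_Ioo] at this
    have h1 := (lt_div_iff₀ hε).mp this.1
    have h2 := (div_lt_iff₀ hε).mp this.2
    apply hx
    constructor <;> nlinarith

lemma mollify_integrable (hρ : Continuous ρ)
    (hρsupp : Function.support ρ ⊆ Set.Ioo (-(1/2) : ℝ) (1/2)) (hε : 0 < ε) :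
    Integrable (mollify ρ ε) :=
  (mollify_cont hρ hε).integrable_of_hasCompactSupport (mollify_compactSupport hρsupp hε)

lemma projN_nonneg (hρ : ∀ x, 0 ≤ ρ x) (hε : 0 < ε) (N : ℕ) (k : Fin N) :
    0 ≤ projN N (mollify ρ ε) k := by
  unfold projN
  apply mul_nonneg (Nat.cast_nonneg N)
  apply intervalIntegral.integral_nonneg
  · rcases Nat.eq_zero_or_pos N with h | h
    · simp [h]
    · have h2N : (0:ℝ) < 2 * N := by positivity
      exact (div_le_div_iff_of_pos_right h2N).mpr (by linarith)
  · exact fun u _ => mollify_nonneg hρ hε u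

lemma projN_sum_le (hρc : Continuous ρ) (hρ : ∀ x, 0 ≤ ρ x)
    (hρsupp : Function.support ρ ⊆ Set.Ioo (-(1/2) : ℝ) (1/2)) (hε : 0 < ε)
    (hρint : ∫ x : ℝ, ρ x = 1) (N : ℕ) [NeZero N] (hN : Odd N) :
    (1/(N:ℝ)) * ∑ k : Fin N, projN N (mollify ρ ε) k ≤ 1 := by
  obtain ⟨t, ht⟩ := hN
  have hNpos : 0 < N := Nat.pos_of_ne_zero (NeZero.ne N)
  have hNR : (N : ℝ) ≠ 0 := Nat.cast_ne_zero.mpr hNpos.ne'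
  have hNt : (N : ℝ) = 2 * t + 1 := by exact_mod_cast congrArg (Nat.cast : ℕ → ℝ) ht
  set g : ℝ → ℝ := mollify ρ ε with hg
  set aSeq : ℕ → ℝ := fun i => (2 * (i : ℝ) - N) / (2 * N) with haSeq
  have step1 : (1/(N:ℝ)) * ∑ k : Fin N, projN N g k
      = ∑ k : Fin N,
          ∫ y in ((2 * (centIdx N k : ℝ) - 1) / (2 * N))..((2 * (centIdx N k : ℝ) + 1) / (2 * N)), g y := by
    rw [Finset.mul_sum]
    refine Finset.sum_congr rfl fun k _ => ?_
    unfold projN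
    rw [← mul_assoc]
    field_simp
  rw [step1]
  have tlt : t < N := by omega
  have step2 : ∑ k : Fin N,
      (∫ y in ((2 * (centIdx N k : ℝ) - 1) / (2 * N))..((2 * (centIdx N k : ℝ) + 1) / (2 * N)), g y)
      = ∑ i : Fin N, ∫ y in aSeq (i : ℕ)..aSeq ((i : ℕ) + 1), g y := by
    refine Fintype.sum_equiv (Equiv.addRight (⟨t, tlt⟩ : Fin N)) _ _ fun k => ?_
    simp only [Equiv.coe_addRight]
    have hval : ((k + (⟨t, tlt⟩ : Fin N) : Fin N) : ℕ) = (k.val + t) % N := by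
      simp [Fin.add_def]
    rw [hval]
    rcases le_or_gt k.val ((N - 1) / 2) with hk | hk
    · have hk' : k.val ≤ t := by omega
      have hmod : (k.val + t) % N = k.val + t := Nat.mod_eq_of_lt (by omega)
      have hc : centIdx N k = (k.val : ℤ) := if_pos hk
      rw [hmod, hc]
      congr 1 <;> · simp only [haSeq]; push_cast; rw [hNt]; ring
    · have hk' : t < k.val := by omega
      have hkN : k.val < N := k.isLt
      have hle : N ≤ k.val + t := by omega
      have hmod : (k.val + t) % N = k.val + t - N := by
        rw [Nat.mod_eq_sub_mod hle]; exact Nat.mod_eq_of_lt (by omega)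
      have hc : centIdx N k = (k.val : ℤ) - N := if_neg (by omega)
      rw [hmod, hc]
      congr 1 <;> · simp only [haSeq]; push_cast [hle]; rw [hNt]; ring
  rw [step2]
  have step3 : ∑ i : Fin N, (∫ y in aSeq (i : ℕ)..aSeq ((i : ℕ) + 1), g y)
      = ∫ y in (aSeq 0)..(aSeq N), g y := by
    rw [Fin.sum_univ_eq_sum_range (fun i => ∫ y in aSeq i..aSeq (i + 1), g y) N]
    exact intervalIntegral.sum_integral_adjacent_intervals fun i _ =>
      ((mollify_cont hρc hε).intervalIntegrable _ _)
  rw [step3]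
  have ha0 : aSeq 0 = -(1/2) := by
    simp only [haSeq, Nat.cast_zero]
    field_simp
    ring
  have haN : aSeq N = 1/2 := by
    simp only [haSeq]
    field_simp
    ring
  rw [ha0, haN, intervalIntegral.integral_of_le (by norm_num)]
  calc ∫ y in Set.Ioc (-(1/2) : ℝ) (1/2), g y
      ≤ ∫ y, g y := setIntegral_le_integral (mollify_integrable hρc hρsupp hε)
        (Filter.Eventually.of_forall (mollify_nonneg hρ hε))
    _ = 1 := mollify_integral hρc hε hρint

lemma phiN_eq (N m : ℕ) : phiN N m = fun j => (if m = 0 then 1 else Real.sqrt 2) * vv N m j := by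
  funext j
  rcases eq_or_ne m 0 with h | h
  · simp [phiN, vv, h]
  · simp [phiN, vv, h]

lemma psiN_eq (N m : ℕ) : psiN N m = fun j => Real.sqrt 2 * ww N m j := rfl

lemma ip_mul_right (N : ℕ) (c : ℝ) (f g : Fin N → ℝ) :
    ip N f (fun j => c * g j) = c * ip N f g := by
  have h : ∑ j : Fin N, f j * (c * g j) = c * ∑ j : Fin N, f j * g j := by
    rw [Finset.mul_sum]
    exact Finset.sum_congr rfl fun j _ => by ring
  unfold ip
  rw [h]
  ring

lemma ip_ww_zero (N : ℕ) (f : Fin N → ℝ) : ip N f (ww N 0) = 0 := by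
  unfold ip ww
  simp

lemma term_le (N : ℕ) [NeZero N] (m : ℕ) (a φ : Fin N → ℝ) (ha : ∀ k, 0 ≤ a k)
    (hS : (1/(N:ℝ)) * ∑ j : Fin N, a j ≤ 1) :
    (ip N (convN N a φ) (phiN N m))^2 + (ip N (convN N a φ) (psiN N m))^2
      ≤ (ip N φ (phiN N m))^2 + (ip N φ (psiN N m))^2 := by
  have hAB : (ip N a (vv N m))^2 + (ip N a (ww N m))^2 ≤ 1 := by
    have hb := vw_sum_bound N m a ha
    have hS0 : 0 ≤ (1/(N:ℝ)) * ∑ j : Fin N, a j :=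
      mul_nonneg (by positivity) (Finset.sum_nonneg fun j _ => ha j)
    have h1 : ((1/(N:ℝ)) * ∑ j : Fin N, a j)^2 ≤ 1 := by nlinarith
    unfold ip
    unfold ip at h1
    nlinarith [sq_nonneg (1/(N:ℝ))]
  have hv := ip_conv_vv N m a φ
  have hw := ip_conv_ww N m a φ
  have h2 : (Real.sqrt 2)^2 = 2 := Real.sq_sqrt (by norm_num)
  rw [phiN_eq, psiN_eq, ip_mul_right, ip_mul_right, ip_mul_right, ip_mul_right, hv, hw]
  rcases eq_or_ne m 0 with h | h
  · subst h
    rw [if_pos rfl]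
    rw [ip_ww_zero, ip_ww_zero]
    nlinarith [hAB, sq_nonneg (ip N φ (vv N 0)), sq_nonneg (ip N a (vv N 0) * ip N φ (vv N 0))]
  · rw [if_neg h]
    have key : ((ip N a (vv N m))^2 + (ip N a (ww N m))^2)
        * ((ip N φ (vv N m))^2 + (ip N φ (ww N m))^2)
        ≤ (ip N φ (vv N m))^2 + (ip N φ (ww N m))^2 :=
      mul_le_of_le_one_left (by positivity) hAB
    nlinarith [key, h2]

/-- Discrete mollification is a contraction in every discrete Sobolev norm `H_N^α`,
`α ∈ [-1,1]`: `‖ρ^{ε,N} *_N φ‖_{H_N^α} ≤ ‖φ‖_{H_N^α}`. -/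
theorem stmt_14 (ρ : ℝ → ℝ) (hρsm : ContDiff ℝ (⊤ : ℕ∞) ρ) (hρpos : ∀ x, 0 ≤ ρ x)
    (hρeven : ∀ x, ρ (-x) = ρ x)
    (hρsupp : Function.support ρ ⊆ Set.Ioo (-(1/2) : ℝ) (1/2))
    (hρint : ∫ x : ℝ, ρ x = 1)
    (ε : ℝ) (hε : 0 < ε) (α : ℝ) (hα1 : -1 ≤ α) (hα2 : α ≤ 1) :
    ∀ (N : ℕ) [NeZero N], Odd N → ∀ φ : Fin N → ℝ,
      sobNorm N α (convN N (projN N (mollify ρ ε)) φ) ≤ sobNorm N α φ := by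
  intro N instN hNodd φ
  apply Real.sqrt_le_sqrt
  unfold sobNormSq
  refine Finset.sum_le_sum fun m _ => ?_
  have hlam : 0 ≤ lamd N m := by
    unfold lamd
    nlinarith [Real.cos_le_one (2 * Real.pi * m / N), sq_nonneg (N : ℝ)]
  refine mul_le_mul_of_nonneg_left ?_ (Real.rpow_nonneg (by linarith) α)
  exact term_le N m (projN N (mollify ρ ε)) φ (projN_nonneg hρpos hε N)
    (projN_sum_le hρsm.continuous hρpos hρsupp hε hρint N hNodd)
end
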